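/- arXiv:1905.01689 — 11 statements merged into one kernel-verified Lean document; each statement's English description precedes it below -/
import Mathlib

section
/- Let G = (V,E) be a finite connected graph and Bip(G) its edge subdivision. A chip configuration x ∈ Z^V is a break divisor of G if and only if d_G − 1 − x is a hypertree of Bip(G) on V, where d_G is the degree vector of G and 1 is the all-ones vector. -/
open Finset

/-- The bipartite graph `Bip(G)` obtained from a graph `G` by subdividing each edge
with a new node. -/
def BipG {V : Type} (G : SimpleGraph V) : SimpleGraph (V ⊕ G.edgeSet) where
  Adj a b := ∃ (v : V) (e : G.edgeSet), v ∈ (e : Sym2 V) ∧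
    ((a = Sum.inl v ∧ b = Sum.inr e) ∨ (b = Sum.inl v ∧ a = Sum.inr e))
  symm := by
    constructor
    rintro a b ⟨v, e, hv, h | h⟩
    exacts [⟨v, e, hv, Or.inr h⟩, ⟨v, e, hv, Or.inl h⟩]
  loopless := by
    constructor
    rintro a ⟨v, e, hv, ⟨h1, h2⟩ | ⟨h1, h2⟩⟩ <;> subst h1 <;> simp at h2

/-- `x` is a break divisor of `G`: there is a spanning tree `T` and an assignment of
one chip to an endpoint of each edge outside `T` realizing `x`. -/
def IsBreakDivisor {V : Type} (G : SimpleGraph V) (x : V → ℤ) : Prop :=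
  ∃ T : SimpleGraph V, T ≤ G ∧ T.IsTree ∧
    ∃ c : G.edgeSet → V,
      (∀ e : G.edgeSet, (e : Sym2 V) ∉ T.edgeSet → c e ∈ (e : Sym2 V)) ∧
      ∀ v : V, x v =
        (({e : G.edgeSet | (e : Sym2 V) ∉ T.edgeSet ∧ c e = v}).ncard : ℤ)

/-! Both sides are encoded by one subgraph of `Bip(G)`: given a spanning tree `T` and chips `c`,
cut every edge node `e ∉ T` off from its chip `c e`. The nodes of tree edges keep degree 2 and the
others become leaves, so this graph is connected iff `T` is, and it has `|E| + |T|` edges on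
`|V| + |E|` vertices; hence it is a tree iff `T` is. The degree of `v` drops by exactly the number
of chips on `v`. Conversely, every spanning tree of `Bip(G)` is of this form, with `T` the edges
whose node is adjacent to both endpoints and `c e` a missing endpoint of every other edge. -/

open SimpleGraph

theorem SimpleGraph.Reachable.map_of_forall_adj {α β : Type*} {G : SimpleGraph α}
    {H : SimpleGraph β} (f : α → β) (hf : ∀ a b, G.Adj a b → H.Reachable (f a) (f b))
    {a b : α} (h : G.Reachable a b) : H.Reachable (f a) (f b) := by
  obtain ⟨p⟩ := h
  induction p with
  | nil => rfl
  | cons hadj _ ih => exact (hf _ _ hadj).trans ih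

section BipG

variable {V : Type} {G : SimpleGraph V}

@[simp]
theorem bipG_adj_inl_inr {v : V} {e : G.edgeSet} :
    (BipG G).Adj (.inl v) (.inr e) ↔ v ∈ (e : Sym2 V) := by
  constructor
  · rintro ⟨w, f, hw, ⟨h₁, h₂⟩ | ⟨-, h⟩⟩
    · cases h₁; cases h₂; exact hw
    · cases h
  · exact fun hv => ⟨v, e, hv, .inl ⟨rfl, rfl⟩⟩

theorem not_bipG_adj_inl_inl {v w : V} : ¬(BipG G).Adj (.inl v) (.inl w) := by
  rintro ⟨u, f, -, ⟨-, h⟩ | ⟨-, h⟩⟩ <;> cases h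

theorem not_bipG_adj_inr_inr {e f : G.edgeSet} : ¬(BipG G).Adj (.inr e) (.inr f) := by
  rintro ⟨u, g, -, ⟨h, -⟩ | ⟨h, -⟩⟩ <;> cases h

variable {A B : SimpleGraph (V ⊕ G.edgeSet)}

theorem eq_of_le_bipG (hA : A ≤ BipG G) (hB : B ≤ BipG G)
    (h : ∀ v e, A.Adj (.inl v) (.inr e) ↔ B.Adj (.inl v) (.inr e)) : A = B := by
  ext (v | e) (w | f)
  · exact iff_of_false (not_bipG_adj_inl_inl <| hA ·) (not_bipG_adj_inl_inl <| hB ·)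
  · exact h v f
  · exact A.adj_comm _ _ |>.trans <| (h w e).trans <| B.adj_comm _ _
  · exact iff_of_false (not_bipG_adj_inr_inr <| hA ·) (not_bipG_adj_inr_inr <| hB ·)

theorem neighborSet_inl_of_le_bipG (hA : A ≤ BipG G) (v : V) :
    A.neighborSet (.inl v) = .inr '' {e | A.Adj (.inl v) (.inr e)} := by
  ext (w | e)
  · exact iff_of_false (not_bipG_adj_inl_inl <| hA ·) (by simp)
  · simp

theorem neighborSet_inr_of_le_bipG (hA : A ≤ BipG G) (e : G.edgeSet) :
    A.neighborSet (.inr e) = .inl '' {v | A.Adj (.inl v) (.inr e)} := by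
  ext (v | f)
  · simp [A.adj_comm]
  · exact iff_of_false (not_bipG_adj_inr_inr <| hA ·) (by simp)

theorem SimpleGraph.Connected.exists_adj_inr_of_le_bipG (hA : A ≤ BipG G) (hconn : A.Connected)
    (e : G.edgeSet) : ∃ v, A.Adj (.inl v) (.inr e) := by
  obtain ⟨z, hz⟩ := e
  induction z using Sym2.ind with | _ u w =>
  have : Nontrivial (V ⊕ G.edgeSet) := ⟨⟨.inl u, .inr ⟨_, hz⟩, Sum.inl_ne_inr⟩⟩
  obtain ⟨v | f, h⟩ := hconn.preconnected.exists_adj_of_nontrivial (.inr ⟨_, hz⟩)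
  · exact ⟨v, h.symm⟩
  · exact (not_bipG_adj_inr_inr (hA h)).elim

theorem card_edgeSet_of_le_bipG [Fintype V] [Fintype G.edgeSet] (hA : A ≤ BipG G) :
    Nat.card A.edgeSet = ∑ e : G.edgeSet, {v | A.Adj (.inl v) (.inr e)}.ncard := by
  classical
  have hbip : A.IsBipartiteWith (univ.map .inl : Finset (V ⊕ G.edgeSet))
      (univ.map .inr : Finset (V ⊕ G.edgeSet)) := by
    refine ⟨by simpa using Set.isCompl_range_inl_range_inr.disjoint, ?_⟩
    rintro (v | e) (w | f) h
    · exact (not_bipG_adj_inl_inl (hA h)).elim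
    · simp
    · simp
    · exact (not_bipG_adj_inr_inr (hA h)).elim
  rw [Nat.card_eq_fintype_card, ← edgeFinset_card,
    ← isBipartiteWith_sum_degrees_eq_card_edges' hbip, sum_map]
  refine sum_congr rfl fun e _ => ?_
  rw [← card_neighborSet_eq_degree, ← Nat.card_eq_fintype_card, Nat.card_coe_set_eq,
    Function.Embedding.inr_apply, neighborSet_inr_of_le_bipG hA,
    Set.ncard_image_of_injective _ Sum.inl_injective]

end BipG

section chipGraph

variable {V : Type} (G : SimpleGraph V) {T : SimpleGraph V} {c : G.edgeSet → V}

def chipGraph (T : SimpleGraph V) (c : G.edgeSet → V) : SimpleGraph (V ⊕ G.edgeSet) :=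
  (BipG G).deleteEdges
    (Set.range fun e : {e : G.edgeSet // (e : Sym2 V) ∉ T.edgeSet} => s(.inl (c e), .inr e.1))

variable {G}

theorem chipGraph_le : chipGraph G T c ≤ BipG G := deleteEdges_le _

@[simp]
theorem chipGraph_adj_inl_inr {v : V} {e : G.edgeSet} :
    (chipGraph G T c).Adj (.inl v) (.inr e) ↔
      v ∈ (e : Sym2 V) ∧ ((e : Sym2 V) ∉ T.edgeSet → c e ≠ v) := by
  simp [chipGraph, not_imp_comm]

theorem exists_chipGraph_adj_inr (e : G.edgeSet) :
    ∃ v, (chipGraph G T c).Adj (.inl v) (.inr e) := by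
  obtain ⟨z, hz⟩ := e
  induction z using Sym2.ind with | _ u w =>
  have huw : u ≠ w := (G.mem_edgeSet.1 hz).ne
  by_cases hu : c ⟨_, hz⟩ = u
  · exact ⟨w, by simp [hu, huw]⟩
  · exact ⟨u, by simp [hu]⟩

theorem reachable_of_chipGraph_adj_inr
    (hc : ∀ e : G.edgeSet, (e : Sym2 V) ∉ T.edgeSet → c e ∈ (e : Sym2 V))
    {u w : V} {e : G.edgeSet} (hu : (chipGraph G T c).Adj (.inl u) (.inr e))
    (hw : (chipGraph G T c).Adj (.inl w) (.inr e)) :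
    T.Reachable u w := by
  obtain rfl | huw := eq_or_ne u w
  · rfl
  rw [chipGraph_adj_inl_inr] at hu hw
  have he : (e : Sym2 V) = s(u, w) := (Sym2.mem_and_mem_iff huw).1 ⟨hu.1, hw.1⟩
  refine Adj.reachable (T.mem_edgeSet.1 (he ▸ ?_))
  by_contra hT
  have := hc e hT
  rw [he, Sym2.mem_iff] at this
  exact this.elim (hu.2 hT) (hw.2 hT)

theorem reachable_inl_chipGraph (hTG : T ≤ G) {u w : V} (h : T.Reachable u w) :
    (chipGraph G T c).Reachable (.inl u) (.inl w) := by
  refine h.map_of_forall_adj Sum.inl fun u w huw => ?_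
  let e : G.edgeSet := ⟨s(u, w), hTG huw⟩
  have hu : (chipGraph G T c).Adj (.inl u) (.inr e) := by simp [e, huw]
  have hw : (chipGraph G T c).Adj (.inl w) (.inr e) := by simp [e, huw]
  exact hu.reachable.trans hw.reachable.symm

theorem connected_chipGraph_iff (hTG : T ≤ G)
    (hc : ∀ e : G.edgeSet, (e : Sym2 V) ∉ T.edgeSet → c e ∈ (e : Sym2 V)) :
    (chipGraph G T c).Connected ↔ T.Connected := by
  choose φ hφ using (exists_chipGraph_adj_inr : ∀ e : G.edgeSet, ∃ v,
    (chipGraph G T c).Adj (.inl v) (.inr e))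
  simp only [connected_iff_exists_forall_reachable]
  constructor
  · rintro ⟨a, ha⟩
    refine ⟨Sum.elim id φ a, fun w => (ha (.inl w)).map_of_forall_adj (Sum.elim id φ) ?_⟩
    rintro (v | e) (w | f) h
    · exact (not_bipG_adj_inl_inl (chipGraph_le h)).elim
    · exact reachable_of_chipGraph_adj_inr hc h (hφ f)
    · exact (reachable_of_chipGraph_adj_inr hc h.symm (hφ e)).symm
    · exact (not_bipG_adj_inr_inr (chipGraph_le h)).elim
  · rintro ⟨r, hr⟩
    refine ⟨.inl r, ?_⟩
    rintro (v | e)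
    · exact reachable_inl_chipGraph hTG (hr v)
    · exact (reachable_inl_chipGraph hTG (hr (φ e))).trans (hφ e).reachable

open Classical in
theorem ncard_chipGraph_adj_inr
    (hc : ∀ e : G.edgeSet, (e : Sym2 V) ∉ T.edgeSet → c e ∈ (e : Sym2 V)) (e : G.edgeSet) :
    {v | (chipGraph G T c).Adj (.inl v) (.inr e)}.ncard =
      if (e : Sym2 V) ∈ T.edgeSet then 2 else 1 := by
  obtain ⟨z, hz⟩ := e
  induction z using Sym2.ind with | _ u w =>
  have huw : u ≠ w := (G.mem_edgeSet.1 hz).ne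
  split_ifs with hT
  · convert Set.ncard_pair huw
    ext v
    simp [hT]
  · rcases Sym2.mem_iff.1 (hc _ hT) with h | h
    · convert Set.ncard_singleton w
      ext v
      grind [chipGraph_adj_inl_inr]
    · convert Set.ncard_singleton u
      ext v
      grind [chipGraph_adj_inl_inr]

theorem card_edgeSet_chipGraph [Fintype V] (hTG : T ≤ G)
    (hc : ∀ e : G.edgeSet, (e : Sym2 V) ∉ T.edgeSet → c e ∈ (e : Sym2 V)) :
    Nat.card (chipGraph G T c).edgeSet = Nat.card G.edgeSet + Nat.card T.edgeSet := by
  classical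
  have hsplit : ∀ e : G.edgeSet, (if (e : Sym2 V) ∈ T.edgeSet then 2 else 1) =
      1 + if (e : Sym2 V) ∈ T.edgeSet then 1 else 0 := fun e => by split_ifs <;> rfl
  rw [card_edgeSet_of_le_bipG chipGraph_le]
  simp_rw [ncard_chipGraph_adj_inr hc, hsplit]
  rw [sum_add_distrib, sum_const, card_univ, smul_eq_mul, mul_one, sum_boole, Nat.cast_id,
    ← Fintype.card_subtype, ← Nat.card_eq_fintype_card (α := {e : G.edgeSet // _}),
    Nat.card_eq_fintype_card (α := G.edgeSet)]
  exact congrArg _ (Nat.card_congr (Equiv.subtypeSubtypeEquivSubtype (edgeSet_mono hTG ·)))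

theorem isTree_chipGraph_iff [Finite V] (hTG : T ≤ G)
    (hc : ∀ e : G.edgeSet, (e : Sym2 V) ∉ T.edgeSet → c e ∈ (e : Sym2 V)) :
    (chipGraph G T c).IsTree ↔ T.IsTree := by
  have := Fintype.ofFinite V
  rw [isTree_iff_connected_and_card, isTree_iff_connected_and_card,
    connected_chipGraph_iff hTG hc, card_edgeSet_chipGraph hTG hc, Nat.card_sum]
  exact and_congr_right' (by omega)

theorem ncard_setOf_mem_edgeSet (v : V) :
    {e : G.edgeSet | v ∈ (e : Sym2 V)}.ncard = (G.neighborSet v).ncard := by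
  classical
  rw [← Set.ncard_image_of_injective _ Subtype.val_injective, ← Nat.card_coe_set_eq,
    ← Nat.card_coe_set_eq]
  convert Nat.card_congr (G.incidenceSetEquivNeighborSet v)
  ext e
  simp [incidenceSet, and_comm]

theorem ncard_neighborSet_chipGraph_add_ncard_chips [Finite V]
    (hc : ∀ e : G.edgeSet, (e : Sym2 V) ∉ T.edgeSet → c e ∈ (e : Sym2 V)) (v : V) :
    ((chipGraph G T c).neighborSet (.inl v)).ncard +
      {e : G.edgeSet | (e : Sym2 V) ∉ T.edgeSet ∧ c e = v}.ncard = (G.neighborSet v).ncard := by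
  rw [neighborSet_inl_of_le_bipG chipGraph_le, Set.ncard_image_of_injective _ Sum.inr_injective,
    ← Set.ncard_union_eq, ← ncard_setOf_mem_edgeSet]
  · congr 1
    ext e
    simp only [Set.mem_union, Set.mem_ofPred_eq, chipGraph_adj_inl_inr]
    refine ⟨?_, fun hv => ?_⟩
    · rintro (⟨hv, -⟩ | ⟨hT, rfl⟩)
      exacts [hv, hc e hT]
    · by_cases h : (e : Sym2 V) ∉ T.edgeSet ∧ c e = v
      exacts [.inr h, .inl ⟨hv, fun hT hce => h ⟨hT, hce⟩⟩]
  · exact Set.disjoint_left.2 fun e h₁ h₂ => (chipGraph_adj_inl_inr.1 h₁).2 h₂.1 h₂.2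

end chipGraph

theorem exists_eq_chipGraph {V : Type} {G : SimpleGraph V} {A : SimpleGraph (V ⊕ G.edgeSet)}
    (hA : A ≤ BipG G) (hconn : A.Connected) :
    ∃ T ≤ G, ∃ c : G.edgeSet → V,
      (∀ e : G.edgeSet, (e : Sym2 V) ∉ T.edgeSet → c e ∈ (e : Sym2 V)) ∧
        A = chipGraph G T c := by
  let T := fromEdgeSet
    (Subtype.val '' {e : G.edgeSet | ∀ v ∈ (e : Sym2 V), A.Adj (.inl v) (.inr e)})
  have hT : ∀ e : G.edgeSet,
      (e : Sym2 V) ∈ T.edgeSet ↔ ∀ v ∈ (e : Sym2 V), A.Adj (.inl v) (.inr e) := by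
    intro e
    simp [T, G.not_isDiag_of_mem_edgeSet e.2]
  have hchip : ∀ e : G.edgeSet, ∃ v ∈ (e : Sym2 V),
      (e : Sym2 V) ∉ T.edgeSet → ¬A.Adj (.inl v) (.inr e) := by
    intro e
    by_cases h : (e : Sym2 V) ∈ T.edgeSet
    · obtain ⟨v, hv⟩ := hconn.exists_adj_inr_of_le_bipG hA e
      exact ⟨v, bipG_adj_inl_inr.1 (hA hv), (· h |>.elim)⟩
    · obtain ⟨v, hv, hnadj⟩ := not_forall₂.1 ((hT e).not.1 h)
      exact ⟨v, hv, fun _ => hnadj⟩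
  choose c hcm hcA using hchip
  refine ⟨T, ?_, c, fun e _ => hcm e, eq_of_le_bipG hA chipGraph_le fun v e => ?_⟩
  · rw [fromEdgeSet_le]
    rintro _ ⟨⟨e, -, rfl⟩, -⟩
    exact e.2
  rw [chipGraph_adj_inl_inr]
  refine ⟨fun h => ⟨bipG_adj_inl_inr.1 (hA h), fun hTe hce => hcA e hTe (hce ▸ h)⟩, ?_⟩
  rintro ⟨hv, hcv⟩
  by_cases hTe : (e : Sym2 V) ∈ T.edgeSet
  · exact (hT e).1 hTe v hv
  -- `e` has some neighbour `u`; if `u ≠ v`, then `e = s(u, v)` leaves no room for `c e`.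
  obtain ⟨u, hu⟩ := hconn.exists_adj_inr_of_le_bipG hA e
  obtain rfl | huv := eq_or_ne u v
  · exact hu
  have he := (Sym2.mem_and_mem_iff huv).1 ⟨bipG_adj_inl_inr.1 (hA hu), hv⟩
  have hce := hcm e
  rw [he, Sym2.mem_iff] at hce
  rcases hce with h | h
  · exact (hcA e hTe (h ▸ hu)).elim
  · exact (hcv hTe h).elim

theorem break_divisor_iff_hypertree_general
    {V : Type} [Fintype V]
    (G : SimpleGraph V)
    (x : V → ℤ) :
    IsBreakDivisor G x ↔
    (∃ T : SimpleGraph (V ⊕ G.edgeSet), T ≤ BipG G ∧ T.IsTree ∧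
        ∀ v : V, ((T.neighborSet (Sum.inl v)).ncard : ℤ) =
          ((G.neighborSet v).ncard : ℤ) - 1 - x v + 1) := by
  constructor
  · rintro ⟨T, hTG, hT, c, hc, hx⟩
    refine ⟨chipGraph G T c, chipGraph_le, (isTree_chipGraph_iff hTG hc).2 hT, fun v => ?_⟩
    have := ncard_neighborSet_chipGraph_add_ncard_chips hc v
    rw [hx v]
    omega
  · rintro ⟨A, hA, hAt, hdeg⟩
    obtain ⟨T, hTG, c, hc, rfl⟩ := exists_eq_chipGraph hA hAt.connected
    refine ⟨T, hTG, (isTree_chipGraph_iff hTG hc).1 hAt, c, hc, fun v => ?_⟩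
    have := ncard_neighborSet_chipGraph_add_ncard_chips hc v
    have := hdeg v
    omega

/-- `x ∈ ℤ^V` is a break divisor of `G` if and only if `d_G − 1 − x`
is a hypertree of `Bip(G)` on `V`, i.e. some spanning tree `T` of `Bip(G)` has
degree `d_G(v) − x(v)` at every original vertex `v`. -/
theorem break_divisor_iff_hypertree
    {V : Type} [Fintype V] [DecidableEq V]
    (G : SimpleGraph V) (hG : G.Connected)
    (x : V → ℤ) :
    IsBreakDivisor G x ↔
    (∃ T : SimpleGraph (V ⊕ G.edgeSet), T ≤ BipG G ∧ T.IsTree ∧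
        ∀ v : V, ((T.neighborSet (Sum.inl v)).ncard : ℤ) =
          ((G.neighborSet v).ncard : ℤ) - 1 - x v + 1) :=
  break_divisor_iff_hypertree_general G x
end

section
/- Let H be a finite connected bipartite graph with vertex classes U and W, and for S ⊆ U let Γ(S) ⊆ W be the set of neighbors of S. A vector f: U → Z is a hypertree of H on U if and only if f(S) ≤ |Γ(S)| − 1 for every nonempty S ⊆ U and f(U) = |W| − 1, where f(S) denotes the sum of f over S. -/
/-
Root a spanning tree `T` at some `w₀ ∈ W`. Every `u ∈ U` then has one parent and `d_T(u) - 1`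
children, all in `W`, and every `w ≠ w₀` has one parent in `U`. So `f` is a hypertree iff each
`w ≠ w₀` can be assigned to an adjacent parent in `U`, with `f(u)` vertices assigned to `u`, and
each `u` can be given an adjacent parent in `W` so that parent chains reach `w₀`.

Necessity: the children of the vertices of `S`, together with the parent of a vertex of `S`
closest to the root, are distinct vertices of `Γ(S)`.

Sufficiency: Hall's theorem with capacities `f` gives the assignment; the Hall condition for
`A ⊆ W ∖ {w₀}` is the hypothesis for `S = U ∖ Γ(A)`. The hypothesis then also says that `Γ(S)` is
never covered by the children of `S`, so every nonempty `S` has a vertex adjacent to `w₀` or to a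
child of a vertex outside `S`. Peeling such vertices off ranks `U` so that each `u` is adjacent to
`w₀` or to a child of a lower-ranked vertex, which is then taken as the parent of `u`.
-/

open Finset

theorem Fintype.card_subtype_ne_add_one {α : Type*} [Fintype α] [DecidableEq α] (a : α) :
    Fintype.card {x // x ≠ a} + 1 = Fintype.card α := by
  have := Fintype.card_pos_iff.2 ⟨a⟩
  rw [Fintype.card_subtype_compl, Fintype.card_subtype_eq]
  omega

theorem Finset.exists_card_fiber_le_of_hall {α β : Type*} [Fintype α] [DecidableEq β]
    (r : α → Finset β) (c : β → ℕ) (h : ∀ A : Finset α, #A ≤ ∑ b ∈ A.biUnion r, c b) :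
    ∃ g : α → β, (∀ a, g a ∈ r a) ∧ ∀ b, #{a | g a = b} ≤ c b := by
  obtain ⟨g, hinj, hg⟩ := (all_card_le_biUnion_card_iff_exists_injective
    fun a ↦ (r a).sigma fun b ↦ (univ : Finset (Fin (c b)))).1 fun A ↦ by
      have : (A.biUnion fun a ↦ (r a).sigma fun b ↦ (univ : Finset (Fin (c b)))) =
          (A.biUnion r).sigma fun b ↦ univ := by
        ext ⟨b, i⟩
        simp
      simpa [this] using h A
  refine ⟨fun a ↦ (g a).1, fun a ↦ (mem_sigma.1 (hg a)).1, fun b ↦ ?_⟩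
  calc #{a | (g a).1 = b}
      ≤ #(({b} : Finset β).sigma fun b ↦ (univ : Finset (Fin (c b)))) :=
        card_le_card_of_injOn g (fun a ha ↦ by simpa using ha) hinj.injOn
    _ = c b := by simp

theorem exists_rank_of_forall_exists_mem_compl {α : Type*} [Fintype α] [DecidableEq α]
    (G : α → Set α → Prop) (hmono : ∀ u ⦃X Y⦄, X ⊆ Y → G u X → G u Y)
    (hesc : ∀ A : Finset α, A.Nonempty → ∃ u ∈ A, G u ↑Aᶜ) :
    ∃ rk : α → ℕ, ∀ u, G u {v | rk v < rk u} := by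
  -- `A` is the set of elements not ranked yet; the element of `A` given by `hesc` is ranked
  -- above all others.
  suffices ∀ A : Finset α, (∃ rk : α → ℕ, ∀ u ∉ A, G u {v | v ∉ A ∧ rk v < rk u}) →
      ∃ rk : α → ℕ, ∀ u, G u {v | rk v < rk u} from this univ ⟨0, by simp⟩
  intro A
  induction A using Finset.strongInduction with
  | H A ih =>
    rintro ⟨rk, hrk⟩
    obtain rfl | hA := A.eq_empty_or_nonempty
    · exact ⟨rk, fun u ↦ hmono u (fun v hv ↦ hv.2) (hrk u (notMem_empty u))⟩
    obtain ⟨u, hu, hGu⟩ := hesc A hA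
    refine ih _ (erase_ssubset hu) ⟨Function.update rk u (univ.sup rk + 1), fun v hv ↦ ?_⟩
    have update_of_notMem : ∀ x ∉ A, Function.update rk u (univ.sup rk + 1) x = rk x :=
      fun x hx ↦ Function.update_of_ne (ne_of_mem_of_not_mem hu hx).symm _ _
    by_cases hvu : v = u
    · subst hvu
      refine hmono v (fun x hx ↦ ?_) hGu
      have hx : x ∉ A := by simpa using hx
      simp only [Set.mem_ofPred_eq, mem_erase, hx, and_false, not_false_eq_true,
        update_of_notMem x hx, Function.update_self, true_and]
      exact Nat.lt_succ_of_le (le_sup (mem_univ x))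
    · have hvA : v ∉ A := fun h ↦ hv (mem_erase.2 ⟨hvu, h⟩)
      refine hmono v (fun x hx ↦ ?_) (hrk v hvA)
      obtain ⟨hxA, hlt⟩ := hx
      simp [hxA, update_of_notMem x hxA, update_of_notMem v hvA, hlt]

namespace SimpleGraph

section Parent

variable {V : Type*} {G : SimpleGraph V}

theorem isAcyclic_of_parent (r : V) (par : V → V) (ht : V → ℕ)
    (hpar : ∀ v ≠ r, ht (par v) < ht v)
    (hedge : ∀ ⦃x y⦄, G.Adj x y → (x ≠ r ∧ par x = y) ∨ (y ≠ r ∧ par y = x)) :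
    G.IsAcyclic := by
  classical
  -- Both neighbours on the cycle of its highest vertex would be the parent of that vertex.
  intro v c hc
  obtain ⟨x, hx, hmax⟩ := c.support.toFinset.exists_max_image ht ⟨v, by simp⟩
  rw [List.mem_toFinset] at hx
  have hc' : (c.rotate x hx).IsCycle := hc.rotate hx
  have parent_eq : ∀ y ∈ (c.rotate x hx).support, G.Adj x y → par x = y := by
    intro y hy hxy
    refine ((hedge hxy).resolve_right fun ⟨hyr, hyx⟩ ↦ ?_).2
    have := hmax y (by simpa using hy)
    have := hyx ▸ hpar y hyr
    omega
  exact hc'.snd_ne_penultimate <|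
    (parent_eq _ (Walk.getVert_mem_support _ _) (Walk.adj_snd hc'.not_nil)).symm.trans
      (parent_eq _ (Walk.getVert_mem_support _ _) (Walk.adj_penultimate hc'.not_nil).symm)

theorem reachable_of_parent (r : V) (par : V → V) (ht : V → ℕ)
    (hadj : ∀ v ≠ r, G.Adj v (par v)) (hpar : ∀ v ≠ r, ht (par v) < ht v) (v : V) :
    G.Reachable v r := by
  induction h : ht v using Nat.strong_induction_on generalizing v with
  | _ n ih =>
    by_cases hv : v = r
    · exact hv ▸ Reachable.refl _
    · exact (hadj v hv).reachable.trans (ih _ (h ▸ hpar v hv) _ rfl)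

theorem isTree_of_parent (r : V) (par : V → V) (ht : V → ℕ)
    (hadj : ∀ v ≠ r, G.Adj v (par v)) (hpar : ∀ v ≠ r, ht (par v) < ht v)
    (hedge : ∀ ⦃x y⦄, G.Adj x y → (x ≠ r ∧ par x = y) ∨ (y ≠ r ∧ par y = x)) :
    G.IsTree where
  connected := (connected_iff G).2 ⟨fun x y ↦ (reachable_of_parent r par ht hadj hpar x).trans
    (reachable_of_parent r par ht hadj hpar y).symm, ⟨r⟩⟩
  isAcyclic := isAcyclic_of_parent r par ht hpar hedge

theorem IsTree.existsUnique_adj_dist_add_one (hT : G.IsTree) (r : V) {v : V} (hv : v ≠ r) :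
    ∃! x, G.Adj v x ∧ G.dist r x + 1 = G.dist r v := by
  refine existsUnique_of_exists_of_unique ?_ ?_
  · obtain ⟨p, -, hp⟩ := hT.connected.exists_path_of_dist v r
    have hnil : ¬ p.Nil := Walk.not_nil_of_ne hv
    have hadj := p.adj_snd hnil
    have htail := G.dist_le p.tail
    have hlen := p.length_tail_add_one hnil
    have htri := hT.connected.dist_triangle (u := r) (v := p.snd) (w := v)
    rw [dist_eq_one_iff_adj.2 hadj.symm] at htri
    rw [dist_comm] at hp htail
    exact ⟨p.snd, hadj, by omega⟩
  · rintro x y ⟨hx, hdx⟩ ⟨hy, hdy⟩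
    obtain ⟨px, -, hlx⟩ := hT.connected.exists_path_of_dist r x
    obtain ⟨py, -, hly⟩ := hT.connected.exists_path_of_dist r y
    have hpx := (px.concat hx.symm).isPath_of_length_eq_dist (by simp [hlx, hdx])
    have hpy := (py.concat hy.symm).isPath_of_length_eq_dist (by simp [hly, hdy])
    have := congrArg (fun p : G.Path r v ↦ p.1.penultimate)
      ((hT.isAcyclic.subsingleton_path r v).elim ⟨_, hpx⟩ ⟨_, hpy⟩)
    simpa [Walk.penultimate_concat] using this

end Parent

variable {U W : Type*}

def bipartiteOfRel (R : U → W → Prop) : SimpleGraph (U ⊕ W) where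
  Adj
    | .inl u, .inr w => R u w
    | .inr w, .inl u => R u w
    | _, _ => False
  symm.symm := by rintro (u | w) (u' | w') <;> simp
  loopless.irrefl := by rintro (u | w) <;> simp

section bipartiteOfRel

variable (R : U → W → Prop)

@[simp] theorem bipartiteOfRel_adj_inl_inr (u : U) (w : W) :
    (bipartiteOfRel R).Adj (.inl u) (.inr w) ↔ R u w := Iff.rfl

@[simp] theorem bipartiteOfRel_adj_inr_inl (u : U) (w : W) :
    (bipartiteOfRel R).Adj (.inr w) (.inl u) ↔ R u w := Iff.rfl

@[simp] theorem bipartiteOfRel_not_adj_inl_inl (u u' : U) :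
    ¬ (bipartiteOfRel R).Adj (.inl u) (.inl u') := id

@[simp] theorem bipartiteOfRel_not_adj_inr_inr (w w' : W) :
    ¬ (bipartiteOfRel R).Adj (.inr w) (.inr w') := id

theorem neighborSet_bipartiteOfRel_inl (u : U) :
    (bipartiteOfRel R).neighborSet (.inl u) = .inr '' {w | R u w} := by
  ext (u' | w) <;> simp

end bipartiteOfRel

/-- `Γ(S)`. -/
def rightNeighbors [Fintype W] (H : SimpleGraph (U ⊕ W)) [DecidableRel H.Adj] (S : Finset U) :
    Finset W :=
  {w | ∃ u ∈ S, H.Adj (.inl u) (.inr w)}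

theorem card_rightNeighbors [Fintype W] {H : SimpleGraph (U ⊕ W)} [DecidableRel H.Adj]
    (S : Finset U) : #(H.rightNeighbors S) = {w : W | ∃ u ∈ S, H.Adj (.inl u) (.inr w)}.ncard := by
  rw [rightNeighbors, ← Set.ncard_coe_finset, coe_filter]
  simp

/-- A spanning tree of `H` rooted at `.inr w₀`, given by parent maps: the parent of `.inl u` is
`.inr (parentU u)` and that of `.inr w`, `w ≠ w₀`, is `.inl (parentW w)`. As `rank` drops from
each `u` to its grandparent, parent chains end at the root. -/
structure RootedSpanningTree (H : SimpleGraph (U ⊕ W)) (w₀ : W) where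
  parentW : {w // w ≠ w₀} → U
  parentU : U → W
  rank : U → ℕ
  adj_parentW (w : {w // w ≠ w₀}) : H.Adj (.inl (parentW w)) (.inr w)
  adj_parentU (u : U) : H.Adj (.inl u) (.inr (parentU u))
  rank_lt (u : U) (h : parentU u ≠ w₀) : rank (parentW ⟨parentU u, h⟩) < rank u

namespace RootedSpanningTree

variable {H : SimpleGraph (U ⊕ W)} {w₀ : W} (t : RootedSpanningTree H w₀)

def toGraph : SimpleGraph (U ⊕ W) :=
  bipartiteOfRel fun u w ↦ t.parentU u = w ∨ ∃ h : w ≠ w₀, t.parentW ⟨w, h⟩ = u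

theorem toGraph_le : t.toGraph ≤ H := by
  rintro (u | w) (u' | w') h <;> simp only [toGraph, bipartiteOfRel_adj_inl_inr,
    bipartiteOfRel_adj_inr_inl, bipartiteOfRel_not_adj_inl_inl,
    bipartiteOfRel_not_adj_inr_inr] at h
  · rcases h with rfl | ⟨hw, rfl⟩
    exacts [t.adj_parentU u, t.adj_parentW _]
  · rcases h with rfl | ⟨hw, rfl⟩
    exacts [(t.adj_parentU u').symm, (t.adj_parentW ⟨w, hw⟩).symm]

theorem isTree_toGraph : t.toGraph.IsTree := by
  classical
  refine isTree_of_parent (.inr w₀)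
    (Sum.elim (fun u ↦ .inr (t.parentU u))
      fun w ↦ if h : w = w₀ then .inr w₀ else .inl (t.parentW ⟨w, h⟩))
    (Sum.elim (fun u ↦ 2 * t.rank u + 1)
      fun w ↦ if h : w = w₀ then 0 else 2 * t.rank (t.parentW ⟨w, h⟩) + 2)
    ?_ ?_ ?_
  · rintro (u | w) hv
    · simp [toGraph]
    · have hw : w ≠ w₀ := fun h ↦ hv (h ▸ rfl)
      simp [toGraph, hw]
  · rintro (u | w) hv
    · by_cases h : t.parentU u = w₀
      · simp [h]
      · have := t.rank_lt u h
        simp only [Sum.elim_inl, Sum.elim_inr, h, ↓reduceDIte]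
        omega
    · have hw : w ≠ w₀ := fun h ↦ hv (h ▸ rfl)
      simp [hw]
  · rintro (u | w) (u' | w') h <;> simp only [toGraph, bipartiteOfRel_adj_inl_inr,
      bipartiteOfRel_adj_inr_inl, bipartiteOfRel_not_adj_inl_inl,
      bipartiteOfRel_not_adj_inr_inr] at h
    all_goals rcases h with rfl | ⟨hw, rfl⟩ <;> simp [*]

variable [Fintype W] [DecidableEq W] [DecidableEq U]

def children (u : U) : Finset {w // w ≠ w₀} := {w | t.parentW w = u}

theorem parentU_notMem_children (u : U) :
    t.parentU u ∉ Subtype.val '' (t.children u : Set {w // w ≠ w₀}) := by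
  rintro ⟨⟨w, hw₀⟩, hw, rfl⟩
  simp only [children, coe_filter, mem_univ, true_and, Set.mem_ofPred_eq] at hw
  exact (t.rank_lt u hw₀).ne (congrArg t.rank hw)

theorem ncard_neighborSet_toGraph (u : U) :
    (t.toGraph.neighborSet (.inl u)).ncard = #(t.children u) + 1 := by
  have : {w | t.parentU u = w ∨ ∃ h : w ≠ w₀, t.parentW ⟨w, h⟩ = u} =
      insert (t.parentU u) (Subtype.val '' (t.children u : Set {w // w ≠ w₀})) := by
    ext w
    simp [children, eq_comm]
  rw [toGraph, neighborSet_bipartiteOfRel_inl, Set.ncard_image_of_injective _ Sum.inr_injective,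
    this, Set.ncard_insert_of_notMem (t.parentU_notMem_children u),
    Set.ncard_image_of_injective _ Subtype.val_injective, Set.ncard_coe_finset]

theorem sum_card_children_add_one [Fintype U] : ∑ u, #(t.children u) + 1 = Fintype.card W := by
  unfold children
  rw [sum_card_fiberwise_eq_card_filter, filter_true_of_mem fun _ _ ↦ mem_univ _, card_univ,
    Fintype.card_subtype_ne_add_one]

theorem sum_card_children_lt [DecidableRel H.Adj] {S : Finset U} (hS : S.Nonempty) :
    ∑ u ∈ S, #(t.children u) < #(H.rightNeighbors S) := by
  obtain ⟨u₀, hu₀, hmin⟩ := S.exists_min_image t.rank hS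
  have hmem : t.parentU u₀ ∈ H.rightNeighbors S := by
    simpa [rightNeighbors] using ⟨u₀, hu₀, t.adj_parentU u₀⟩
  have hsub : ({w | t.parentW w ∈ S} : Finset {w // w ≠ w₀}).map (.subtype _) ⊆
      (H.rightNeighbors S).erase (t.parentU u₀) := by
    simp only [subset_iff, mem_map, mem_filter, mem_univ, true_and,
      Function.Embedding.subtype_apply, mem_erase, forall_exists_index, and_imp, Subtype.forall]
    rintro _ w hw₀ hwS rfl
    refine ⟨fun h ↦ ?_, by simpa [rightNeighbors] using ⟨_, hwS, t.adj_parentW ⟨w, hw₀⟩⟩⟩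
    subst h
    have := t.rank_lt u₀ hw₀
    have := hmin _ hwS
    omega
  calc ∑ u ∈ S, #(t.children u)
      = #({w | t.parentW w ∈ S} : Finset {w // w ≠ w₀}) :=
        sum_card_fiberwise_eq_card_filter _ _ _
    _ = #(({w | t.parentW w ∈ S} : Finset {w // w ≠ w₀}).map (.subtype _)) := (card_map _).symm
    _ ≤ #((H.rightNeighbors S).erase (t.parentU u₀)) := card_le_card hsub
    _ < #(H.rightNeighbors S) := card_erase_lt_of_mem hmem

end RootedSpanningTree

theorem exists_rootedSpanningTree_toGraph_eq {H : SimpleGraph (U ⊕ W)}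
    (hbipU : ∀ u u' : U, ¬ H.Adj (.inl u) (.inl u'))
    (hbipW : ∀ w w' : W, ¬ H.Adj (.inr w) (.inr w'))
    {T : SimpleGraph (U ⊕ W)} (hTH : T ≤ H) (hT : T.IsTree) (w₀ : W) :
    ∃ t : RootedSpanningTree H w₀, t.toGraph = T := by
  have parent := fun v ↦ hT.existsUnique_adj_dist_add_one (.inr w₀) (v := v)
  have parentU : ∀ u, ∃ w, T.Adj (.inl u) (.inr w) ∧
      T.dist (.inr w₀) (.inr w) + 1 = T.dist (.inr w₀) (.inl u) := by
    intro u
    obtain ⟨u' | w, ⟨hx, hdx⟩, -⟩ := parent (.inl u) Sum.inl_ne_inr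
    exacts [absurd (hTH hx) (hbipU _ _), ⟨w, hx, hdx⟩]
  have parentW : ∀ w : {w // w ≠ w₀}, ∃ u, T.Adj (.inr w) (.inl u) ∧
      T.dist (.inr w₀) (.inl u) + 1 = T.dist (.inr w₀) (.inr w) := by
    intro w
    obtain ⟨u | w', ⟨hx, hdx⟩, -⟩ := parent (.inr w) (by simpa using w.2)
    exacts [⟨u, hx, hdx⟩, absurd (hTH hx) (hbipW _ _)]
  choose p hp hdp using parentU
  choose q hq hdq using parentW
  have adj_iff : ∀ u w, T.Adj (.inl u) (.inr w) ↔ p u = w ∨ ∃ h : w ≠ w₀, q ⟨w, h⟩ = u := by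
    refine fun u w ↦ ⟨fun hadj ↦ ?_, ?_⟩
    · rcases hT.dist_eq_dist_add_one_of_adj (.inr w₀) hadj with h | h
      · exact .inl (Sum.inr_injective ((parent _ Sum.inl_ne_inr).unique ⟨hp u, hdp u⟩
          ⟨hadj, h.symm⟩))
      · have hw : w ≠ w₀ := by
          rintro rfl
          simp at h
        exact .inr ⟨hw, Sum.inl_injective ((parent _ (by simpa using hw)).unique
          ⟨hq ⟨w, hw⟩, hdq _⟩ ⟨hadj.symm, h.symm⟩)⟩
    · rintro (rfl | ⟨hw, rfl⟩)
      exacts [hp u, (hq ⟨w, hw⟩).symm]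
  refine ⟨⟨q, p, fun u ↦ T.dist (.inr w₀) (.inl u), fun w ↦ hTH (hq w).symm,
    fun u ↦ hTH (hp u), fun u h ↦ ?_⟩, ?_⟩
  · have hq' : T.dist (.inr w₀) (.inl (q ⟨p u, h⟩)) + 1 = T.dist (.inr w₀) (.inr (p u)) :=
      hdq ⟨p u, h⟩
    have := hdp u
    show T.dist _ _ < T.dist _ _
    omega
  · ext (u | w) (u' | w')
    · simpa [RootedSpanningTree.toGraph] using fun h ↦ hbipU _ _ (hTH h)
    · simp [RootedSpanningTree.toGraph, adj_iff]
    · simp [RootedSpanningTree.toGraph, adj_iff, T.adj_comm (.inr w)]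
    · simpa [RootedSpanningTree.toGraph] using fun h ↦ hbipW _ _ (hTH h)

section Finite

variable [Fintype U] [Fintype W] {H : SimpleGraph (U ⊕ W)}

theorem nonneg_of_sum_le_card_rightNeighbors [Nonempty W] [DecidableEq U] [DecidableRel H.Adj]
    {f : U → ℤ} (hle : ∀ S : Finset U, S.Nonempty → ∑ u ∈ S, f u ≤ #(H.rightNeighbors S) - 1)
    (hsum : ∑ u, f u = Fintype.card W - 1) (u : U) : 0 ≤ f u := by
  have hW := Fintype.card_pos (α := W)
  have hsplit := add_sum_erase univ f (mem_univ u)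
  obtain hS | hS := (univ.erase u).eq_empty_or_nonempty
  · rw [hS, sum_empty] at hsplit
    omega
  · have := hle _ hS
    have : #(H.rightNeighbors (univ.erase u)) ≤ Fintype.card W := card_le_univ _
    omega

theorem hypertree_iff_of_isEmpty [IsEmpty W] (hbipU : ∀ u u' : U, ¬ H.Adj (.inl u) (.inl u'))
    (f : U → ℤ) :
    (∃ T : SimpleGraph (U ⊕ W), T ≤ H ∧ T.IsTree ∧
        ∀ u : U, ((T.neighborSet (.inl u)).ncard : ℤ) = f u + 1) ↔
    ((∀ S : Finset U, S.Nonempty →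
        ∑ u ∈ S, f u ≤ ({w : W | ∃ u ∈ S, H.Adj (.inl u) (.inr w)}.ncard : ℤ) - 1) ∧
      ∑ u, f u = (Fintype.card W : ℤ) - 1) := by
  have eq_bot : ∀ T ≤ H, T = ⊥ := by
    intro T hTH
    ext (u | w) (u' | w')
    · simpa using fun h ↦ hbipU _ _ (hTH h)
    all_goals exact isEmptyElim ‹W›
  simp only [Set.eq_empty_of_isEmpty, Set.ncard_empty, Fintype.card_eq_zero, Nat.cast_zero,
    zero_sub]
  constructor
  · rintro ⟨T, hTH, hT, hdeg⟩
    obtain rfl := eq_bot T hTH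
    have hf : ∀ u, f u = -1 := fun u ↦ by simpa [eq_neg_iff_add_eq_zero] using (hdeg u).symm
    have : Subsingleton U := ⟨fun u u' ↦ Sum.inl_injective (reachable_bot.1 (hT.connected _ _))⟩
    obtain ⟨u₀ | w⟩ := hT.connected.nonempty
    · refine ⟨fun S ⟨u, hu⟩ ↦ ?_, by rw [Fintype.sum_subsingleton f u₀, hf]⟩
      rw [eq_singleton_iff_unique_mem.2 ⟨hu, fun x _ ↦ Subsingleton.elim x u⟩, sum_singleton, hf]
    · exact isEmptyElim w
  · rintro ⟨hle, hsum⟩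
    have hf : ∀ u, f u ≤ -1 := fun u ↦ by simpa using hle {u} (singleton_nonempty u)
    obtain hU | ⟨u₀⟩ := isEmpty_or_nonempty U
    · simp at hsum
    have : Subsingleton U := by
      refine Fintype.card_le_one_iff_subsingleton.1 ?_
      have := sum_le_sum fun u (_ : u ∈ univ) ↦ hf u
      simp only [sum_const, card_univ, smul_neg, nsmul_eq_mul, mul_one] at this
      omega
    have : Subsingleton (U ⊕ W) := ⟨by
      rintro (u | w) (u' | w')
      · rw [Subsingleton.elim u u']
      all_goals exact isEmptyElim ‹W›⟩
    refine ⟨⊥, bot_le, .of_subsingleton, fun u ↦ ?_⟩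
    rw [Fintype.sum_subsingleton f u] at hsum
    simp [hsum]

variable [DecidableEq U] [DecidableEq W] [DecidableRel H.Adj]

theorem card_le_sum_biUnion_of_sum_lt_card_rightNeighbors {w₀ : W} {F : U → ℕ}
    (hlt : ∀ S : Finset U, S.Nonempty → ∑ u ∈ S, F u < #(H.rightNeighbors S))
    (hsum : ∑ u, F u + 1 = Fintype.card W) (A : Finset {w // w ≠ w₀}) :
    #A ≤ ∑ u ∈ A.biUnion fun w ↦ ({u | H.Adj (.inl u) (.inr w)} : Finset U), F u := by
  set N := A.biUnion fun w ↦ ({u | H.Adj (.inl u) (.inr w)} : Finset U)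
  have hA := card_le_univ A
  have hcard := Fintype.card_subtype_ne_add_one w₀
  obtain hS | hS := (univ \ N).eq_empty_or_nonempty
  · rw [sdiff_eq_empty_iff_subset, univ_subset_iff] at hS
    rw [hS]
    omega
  have hdisj : Disjoint (H.rightNeighbors (univ \ N)) (A.map (.subtype _)) := by
    simp only [Finset.disjoint_left, rightNeighbors, mem_filter, mem_univ, mem_sdiff, true_and,
      mem_map, Function.Embedding.subtype_apply, not_exists, not_and, forall_exists_index,
      and_imp]
    rintro _ u huN hadj w hwA rfl
    exact huN (mem_biUnion.2 ⟨w, hwA, by simpa using hadj⟩)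
  have hunion := card_le_univ (H.rightNeighbors (univ \ N) ∪ A.map (.subtype _))
  rw [card_union_of_disjoint hdisj, card_map] at hunion
  have := hlt _ hS
  have := sum_sdiff (subset_univ N) (f := F)
  omega

theorem exists_parentW_card_fiber_eq (w₀ : W) (F : U → ℕ)
    (hlt : ∀ S : Finset U, S.Nonempty → ∑ u ∈ S, F u < #(H.rightNeighbors S))
    (hsum : ∑ u, F u + 1 = Fintype.card W) :
    ∃ q : {w // w ≠ w₀} → U, (∀ w, H.Adj (.inl (q w)) (.inr w)) ∧ ∀ u, #{w | q w = u} = F u := by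
  obtain ⟨q, hq, hle⟩ := exists_card_fiber_le_of_hall _ F
    (card_le_sum_biUnion_of_sum_lt_card_rightNeighbors hlt hsum)
  refine ⟨q, fun w ↦ by simpa using hq w, fun u ↦ ?_⟩
  have hcard : ∑ u, #{w | q w = u} = ∑ u, F u := by
    rw [sum_card_fiberwise_eq_card_filter, filter_true_of_mem fun _ _ ↦ mem_univ _, card_univ]
    have := Fintype.card_subtype_ne_add_one w₀
    omega
  exact (sum_eq_sum_iff_of_le fun u _ ↦ hle u).1 hcard u (mem_univ u)

theorem exists_rootedSpanningTree_card_children_eq (w₀ : W) (F : U → ℕ)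
    (hlt : ∀ S : Finset U, S.Nonempty → ∑ u ∈ S, F u < #(H.rightNeighbors S))
    (hsum : ∑ u, F u + 1 = Fintype.card W) :
    ∃ t : RootedSpanningTree H w₀, ∀ u, #(t.children u) = F u := by
  obtain ⟨q, hq, hfib⟩ := exists_parentW_card_fiber_eq w₀ F hlt hsum
  have escape : ∀ A : Finset U, A.Nonempty →
      ∃ u ∈ A, ∃ w, H.Adj (.inl u) (.inr w) ∧ ∀ h : w ≠ w₀, q ⟨w, h⟩ ∈ (↑Aᶜ : Set U) := by
    intro A hA
    by_contra! hcon
    have hsub : H.rightNeighbors A ⊆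
        ({w | q w ∈ A} : Finset {w // w ≠ w₀}).map (.subtype _) := by
      intro w hw
      obtain ⟨u, huA, hadj⟩ := by simpa [rightNeighbors] using hw
      obtain ⟨hw₀, hqA⟩ := hcon u huA w hadj
      simpa [hw₀] using hqA
    have := card_le_card hsub
    rw [card_map, ← sum_card_fiberwise_eq_card_filter] at this
    simp only [hfib] at this
    exact (hlt A hA).not_ge this
  obtain ⟨rk, hrk⟩ := exists_rank_of_forall_exists_mem_compl
    (fun u X ↦ ∃ w, H.Adj (.inl u) (.inr w) ∧ ∀ h : w ≠ w₀, q ⟨w, h⟩ ∈ X)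
    (fun _ _ _ hXY ⟨w, hw, h⟩ ↦ ⟨w, hw, fun hw₀ ↦ hXY (h hw₀)⟩) escape
  choose p hp hrk using hrk
  exact ⟨⟨q, p, rk, hq, hp, hrk⟩, hfib⟩

end Finite

end SimpleGraph

open SimpleGraph

theorem hypertree_characterization_general
    {U W : Type} [Fintype U] [Fintype W]
    (H : SimpleGraph (U ⊕ W))
    (hbipU : ∀ u u' : U, ¬ H.Adj (Sum.inl u) (Sum.inl u'))
    (hbipW : ∀ w w' : W, ¬ H.Adj (Sum.inr w) (Sum.inr w'))
    (f : U → ℤ) :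
    (∃ T : SimpleGraph (U ⊕ W), T ≤ H ∧ T.IsTree ∧
        ∀ u : U, ((T.neighborSet (Sum.inl u)).ncard : ℤ) = f u + 1) ↔
    ((∀ S : Finset U, S.Nonempty →
        ∑ u ∈ S, f u ≤
          (({w : W | ∃ u ∈ S, H.Adj (Sum.inl u) (Sum.inr w)}).ncard : ℤ) - 1) ∧
      ∑ u, f u = (Fintype.card W : ℤ) - 1) := by
  classical
  obtain hW | hW := isEmpty_or_nonempty W
  · exact hypertree_iff_of_isEmpty hbipU f
  obtain ⟨w₀⟩ := id hW
  simp only [← card_rightNeighbors]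
  constructor
  · rintro ⟨T, hTH, hT, hdeg⟩
    obtain ⟨t, rfl⟩ := exists_rootedSpanningTree_toGraph_eq hbipU hbipW hTH hT w₀
    have hf : f = fun u ↦ (#(t.children u) : ℤ) := funext fun u ↦ by
      have := hdeg u
      rw [t.ncard_neighborSet_toGraph] at this
      push_cast at this
      omega
    subst hf
    refine ⟨fun S hS ↦ ?_, ?_⟩ <;> rw [← Nat.cast_sum]
    · have := t.sum_card_children_lt hS
      omega
    · have := t.sum_card_children_add_one
      omega
  · rintro ⟨hle, hsum⟩
    lift f to U → ℕ using nonneg_of_sum_le_card_rightNeighbors hle hsum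
    rw [← Nat.cast_sum] at hsum
    obtain ⟨t, ht⟩ := exists_rootedSpanningTree_card_children_eq (H := H) w₀ f
      (fun S hS ↦ by have := hle S hS; rw [← Nat.cast_sum] at this; omega) (by omega)
    exact ⟨t.toGraph, t.toGraph_le, t.isTree_toGraph, fun u ↦ by
      simp [t.ncard_neighborSet_toGraph, ht]⟩

/-- hypertree characterization. For a finite connected bipartite graph `H`
with classes `U` and `W`, a vector `f : U → ℤ` is a hypertree on `U` iff
`f(S) ≤ |Γ(S)| − 1` for every nonempty `S ⊆ U` and `f(U) = |W| − 1`. -/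
theorem hypertree_characterization
    {U W : Type} [Fintype U] [Fintype W] [DecidableEq U] [DecidableEq W]
    (H : SimpleGraph (U ⊕ W))
    (hbipU : ∀ u u' : U, ¬ H.Adj (Sum.inl u) (Sum.inl u'))
    (hbipW : ∀ w w' : W, ¬ H.Adj (Sum.inr w) (Sum.inr w'))
    (hconn : H.Connected)
    (f : U → ℤ) :
    (∃ T : SimpleGraph (U ⊕ W), T ≤ H ∧ T.IsTree ∧
        ∀ u : U, ((T.neighborSet (Sum.inl u)).ncard : ℤ) = f u + 1) ↔
    ((∀ S : Finset U, S.Nonempty →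
        ∑ u ∈ S, f u ≤
          (({w : W | ∃ u ∈ S, H.Adj (Sum.inl u) (Sum.inr w)}).ncard : ℤ) - 1) ∧
      ∑ u, f u = (Fintype.card W : ℤ) - 1) :=
  hypertree_characterization_general H hbipU hbipW f
end

section
/- Let H be a finite connected bipartite graph with vertex classes U and W, and suppose f is a hypertree of H on U coming from a spanning tree T. Then for every nonempty proper subset S ⊆ U, the sum of f over S is at most |Γ(S)| − 1, where Γ(S) is the neighborhood of S in W. -/
open Finset

/-- If `f` is the hypertree on `U` realized by a spanning tree `T` of a
finite connected bipartite graph `H`, then for every nonempty proper subset `S ⊆ U`,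
the sum of `f` over `S` is at most `|Γ(S)| − 1`. -/
theorem hypertree_subset_inequality
    {U W : Type} [Fintype U] [Fintype W] [DecidableEq U] [DecidableEq W]
    (H : SimpleGraph (U ⊕ W))
    (hbipU : ∀ u u' : U, ¬ H.Adj (Sum.inl u) (Sum.inl u'))
    (hbipW : ∀ w w' : W, ¬ H.Adj (Sum.inr w) (Sum.inr w'))
    (hconn : H.Connected)
    (T : SimpleGraph (U ⊕ W)) (hTle : T ≤ H) (hT : T.IsTree)
    (S : Finset U) (hS : S.Nonempty) (hSproper : S ≠ Finset.univ) :
    ∑ u ∈ S, (((T.neighborSet (Sum.inl u)).ncard : ℤ) - 1) ≤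
      (({w : W | ∃ u ∈ S, H.Adj (Sum.inl u) (Sum.inr w)}).ncard : ℤ) - 1 := by
  classical
  obtain ⟨u1, hu1⟩ := hS
  set r : U ⊕ W := Sum.inl u1 with hr
  choose P hP hP' using (fun v => hT.existsUnique_path v r)
  -- key dichotomy: for any edge, one endpoint's path is the cons of the other's
  have key : ∀ a b (h : T.Adj a b),
      P a = SimpleGraph.Walk.cons h (P b) ∨ P b = SimpleGraph.Walk.cons h.symm (P a) := by
    intro a b h
    rcases Classical.em (a ∈ (P b).support) with hmem | hmem
    · right
      have hdrop : (P b).dropUntil a hmem = P a := hP' a _ ((hP b).dropUntil hmem)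
      have htake : (P b).takeUntil a hmem = SimpleGraph.Walk.cons h.symm SimpleGraph.Walk.nil := by
        have h2 : (SimpleGraph.Walk.cons h.symm SimpleGraph.Walk.nil : T.Walk b a).IsPath := by
          simp [SimpleGraph.Walk.cons_isPath_iff, h.ne']
        exact ExistsUnique.unique (hT.existsUnique_path b a) ((hP b).takeUntil hmem) h2
      calc P b = ((P b).takeUntil a hmem).append ((P b).dropUntil a hmem) :=
              ((P b).take_spec hmem).symm
        _ = SimpleGraph.Walk.cons h.symm (P a) := by rw [htake, hdrop]; simp
    · left
      refine (hP' a _ ?_).symm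
      show (SimpleGraph.Walk.cons h (P b)).IsPath
      rw [SimpleGraph.Walk.cons_isPath_iff]
      exact ⟨hP b, hmem⟩
  -- finsets
  set Γfin : Finset W := univ.filter (fun w => ∃ u ∈ S, T.Adj (Sum.inl u) (Sum.inr w)) with hΓ
  set A : Finset (U ⊕ W) := S.image Sum.inl ∪ Γfin.image Sum.inr with hA
  have hAne : A.Nonempty := ⟨Sum.inl u1, by
    simp only [hA, mem_union, mem_image]
    exact Or.inl ⟨u1, hu1, rfl⟩⟩
  obtain ⟨m, hmA, hmin⟩ := A.exists_min_image (fun v => (P v).length) hAne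
  set E : Finset ((_ : U) × W) :=
    S.sigma (fun u => univ.filter fun w => T.Adj (Sum.inl u) (Sum.inr w)) with hE
  have hmemE : ∀ p : (_ : U) × W, p ∈ E ↔ p.1 ∈ S ∧ T.Adj (Sum.inl p.1) (Sum.inr p.2) := by
    intro p; simp [hE, Finset.mem_sigma]
  -- the child map
  set φ : (_ : U) × W → U ⊕ W := fun p =>
    if (P (Sum.inr p.2)).length < (P (Sum.inl p.1)).length then Sum.inl p.1 else Sum.inr p.2
    with hφ
  have hspec : ∀ p : (_ : U) × W, p ∈ E →
      (φ p = Sum.inl p.1 ∧ (P (Sum.inl p.1)).getVert 1 = Sum.inr p.2 ∧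
        (P (Sum.inr p.2)).length + 1 = (P (Sum.inl p.1)).length)
    ∨ (φ p = Sum.inr p.2 ∧ (P (Sum.inr p.2)).getVert 1 = Sum.inl p.1 ∧
        (P (Sum.inl p.1)).length + 1 = (P (Sum.inr p.2)).length) := by
    intro p hp
    obtain ⟨-, hadj⟩ := (hmemE p).1 hp
    rcases key _ _ hadj with hk | hk
    · left
      have hlen : (P (Sum.inr p.2)).length + 1 = (P (Sum.inl p.1)).length := by
        rw [hk, SimpleGraph.Walk.length_cons]
      refine ⟨?_, ?_, hlen⟩
      · simp [hφ, ← hlen]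
      · rw [hk]; simp [SimpleGraph.Walk.getVert_cons_succ]
    · right
      have hlen : (P (Sum.inl p.1)).length + 1 = (P (Sum.inr p.2)).length := by
        rw [hk, SimpleGraph.Walk.length_cons]
      refine ⟨?_, ?_, hlen⟩
      · simp [hφ, ← hlen]
      · rw [hk]; simp [SimpleGraph.Walk.getVert_cons_succ]
  -- φ maps E into A.erase m
  have hmaps : ∀ p ∈ E, φ p ∈ A.erase m := by
    intro p hp
    obtain ⟨hpS, hadj⟩ := (hmemE p).1 hp
    have hother : ∀ q : U ⊕ W, q ∈ A → (P q).length + 1 = (P (φ p)).length → φ p ∈ A.erase m := by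
      intro q hqA hlen
      have hφA : φ p ∈ A := by
        rcases hspec p hp with ⟨h1, -, -⟩ | ⟨h1, -, -⟩
        · rw [h1]; exact mem_union_left _ (mem_image_of_mem _ hpS)
        · rw [h1]
          refine mem_union_right _ (mem_image_of_mem _ ?_)
          simp only [hΓ, mem_filter, mem_univ, true_and]
          exact ⟨p.1, hpS, hadj⟩
      refine mem_erase.2 ⟨?_, hφA⟩
      intro hcontra
      have := hmin q hqA
      rw [hcontra] at hlen
      omega
    rcases hspec p hp with ⟨h1, -, hlen⟩ | ⟨h1, -, hlen⟩
    · refine hother (Sum.inr p.2) ?_ (by rw [h1]; exact hlen)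
      refine mem_union_right _ (mem_image_of_mem _ ?_)
      simp only [hΓ, mem_filter, mem_univ, true_and]
      exact ⟨p.1, hpS, hadj⟩
    · exact hother (Sum.inl p.1) (mem_union_left _ (mem_image_of_mem _ hpS))
        (by rw [h1]; exact hlen)
  -- φ is injective on E
  have hinj : Set.InjOn φ E := by
    rintro ⟨pu, pw⟩ hp ⟨qu, qw⟩ hq hpq
    rcases hspec _ hp with ⟨h1, h2, -⟩ | ⟨h1, h2, -⟩ <;>
      rcases hspec _ hq with ⟨g1, g2, -⟩ | ⟨g1, g2, -⟩ <;>
      rw [h1, g1] at hpq <;>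
      simp only at h2 g2 hpq
    · obtain rfl : pu = qu := Sum.inl.inj hpq
      rw [h2] at g2
      obtain rfl : pw = qw := Sum.inr.inj g2
      rfl
    · exact absurd hpq (by simp)
    · exact absurd hpq (by simp)
    · obtain rfl : pw = qw := Sum.inr.inj hpq
      rw [h2] at g2
      obtain rfl : pu = qu := Sum.inl.inj g2
      rfl
  have hcard1 : E.card ≤ (A.erase m).card :=
    Finset.card_le_card_of_injOn φ hmaps hinj
  have hcard2 : (A.erase m).card + 1 = A.card := Finset.card_erase_add_one hmA
  have hcardA : A.card = S.card + Γfin.card := by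
    rw [hA, Finset.card_union_of_disjoint, Finset.card_image_of_injective _ Sum.inl_injective,
      Finset.card_image_of_injective _ Sum.inr_injective]
    simp [Finset.disjoint_left]
  -- degree computation
  have hdeg : ∀ u : U, (T.neighborSet (Sum.inl u)).ncard
      = (univ.filter fun w => T.Adj (Sum.inl u) (Sum.inr w)).card := by
    intro u
    have himg : T.neighborSet (Sum.inl u) = Sum.inr '' {w | T.Adj (Sum.inl u) (Sum.inr w)} := by
      ext v
      cases v with
      | inl u' =>
        simp only [SimpleGraph.mem_neighborSet, Set.mem_image]
        constructor
        · intro hadj; exact absurd (hTle hadj) (hbipU u u')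
        · rintro ⟨w, -, hw⟩; exact absurd hw (by simp)
      | inr w => simp [SimpleGraph.mem_neighborSet]
    rw [himg, Set.ncard_image_of_injective _ Sum.inr_injective,
      Set.ncard_eq_toFinset_card']
    congr 1
    ext w
    simp
  have hcardE : E.card = ∑ u ∈ S, (T.neighborSet (Sum.inl u)).ncard := by
    rw [hE, Finset.card_sigma]
    exact Finset.sum_congr rfl fun u _ => (hdeg u).symm
  -- relate Γfin to the H-neighbourhood
  have hΓH : ({w : W | ∃ u ∈ S, H.Adj (Sum.inl u) (Sum.inr w)}).ncard
      = (univ.filter fun w => ∃ u ∈ S, H.Adj (Sum.inl u) (Sum.inr w)).card := by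
    rw [Set.ncard_eq_toFinset_card']
    congr 1
    ext w
    simp
  have hΓle : Γfin.card ≤ (univ.filter fun w => ∃ u ∈ S, H.Adj (Sum.inl u) (Sum.inr w)).card := by
    refine Finset.card_le_card ?_
    intro w hw
    simp only [hΓ, mem_filter, mem_univ, true_and] at hw ⊢
    obtain ⟨u, huS, hadj⟩ := hw
    exact ⟨u, huS, hTle hadj⟩
  -- final arithmetic
  have hsum : ∑ u ∈ S, (((T.neighborSet (Sum.inl u)).ncard : ℤ) - 1)
      = (E.card : ℤ) - S.card := by
    rw [Finset.sum_sub_distrib, Finset.sum_const, nsmul_eq_mul, mul_one, hcardE]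
    push_cast
    ring
  rw [hsum, hΓH]
  have : (E.card : ℤ) + 1 ≤ S.card + Γfin.card := by
    have := hcard1
    omega
  have h2 : (Γfin.card : ℤ) ≤ (univ.filter fun w => ∃ u ∈ S, H.Adj (Sum.inl u) (Sum.inr w)).card := by
    exact_mod_cast hΓle
  linarith
end

section
/- Let D be a finite connected digraph, v₀ a fixed vertex, and A, A' two in-arborescences of D rooted at v₀ (spanning subgraphs whose underlying graph is a tree and in which every vertex other than v₀ has exactly one outgoing edge, with all vertices reaching v₀). Then there exists a sequence of in-arborescences A = A₀, A₁, …, A_k = A' rooted at v₀ such that each A_{i+1} is obtained from A_i by removing one edge and adding one edge. -/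
open Finset

/-- `ρ` is an in-arborescence of the digraph `D` rooted at `v₀`: every vertex other
than `v₀` has exactly one out-edge (given by `ρ`), and every vertex reaches `v₀`. -/
def IsInArb {V : Type} (D : V → V → Prop) (v₀ : V) (ρ : V → V) : Prop :=
  ρ v₀ = v₀ ∧ (∀ v, v ≠ v₀ → D v (ρ v)) ∧ ∀ v, ∃ n : ℕ, ρ^[n] v = v₀

private lemma find_step {V : Type} [DecidableEq V] {ρ : V → V} {v₀ : V}
    (h : ∀ v, ∃ n : ℕ, ρ^[n] v = v₀) (u : V) (hu : u ≠ v₀) :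
    Nat.find (h (ρ u)) < Nat.find (h u) := by
  have h0 : Nat.find (h u) ≠ 0 := by
    intro h0
    have := Nat.find_spec (h u)
    rw [h0] at this; exact hu this
  obtain ⟨m, hm⟩ := Nat.exists_eq_succ_of_ne_zero h0
  have hspec := Nat.find_spec (h u)
  rw [hm, Function.iterate_succ_apply] at hspec
  have : Nat.find (h (ρ u)) ≤ m := Nat.find_le hspec
  omega

private lemma reach_of_swap {V : Type} [DecidableEq V] (D : V → V → Prop) (v₀ : V)
    (A A' : V → V) (hA : IsInArb D v₀ A) (hA' : IsInArb D v₀ A')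
    (v : V) (hv : A v ≠ A' v)
    (hmin : ∀ u, A u ≠ A' u → Nat.find (hA'.2.2 v) ≤ Nat.find (hA'.2.2 u)) :
    ∀ u, ∃ n : ℕ, (Function.update A v (A' v))^[n] u = v₀ := by
  set ρ := Function.update A v (A' v) with hρ
  have hvv0 : v ≠ v₀ := by
    intro h; subst h; exact hv (hA.1.trans hA'.1.symm)
  have d' : ∀ u, ∃ n : ℕ, A'^[n] u = v₀ := hA'.2.2
  -- vertices strictly closer (in A') than v agree
  have hagree : ∀ u, Nat.find (d' u) < Nat.find (d' v) → A u = A' u := by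
    intro u hu
    by_contra h
    exact absurd (hmin u h) (by omega)
  -- claim1 : vertices strictly closer than v reach v₀ under ρ
  have claim1 : ∀ m, ∀ u, Nat.find (d' u) = m → Nat.find (d' u) < Nat.find (d' v) →
      ∃ n : ℕ, ρ^[n] u = v₀ := by
    intro m
    induction m using Nat.strong_induction_on with
    | _ m ih =>
      intro u hm hlt
      by_cases hu0 : u = v₀
      · exact ⟨0, hu0⟩
      · have huv : u ≠ v := by intro h; subst h; omega
        have hstep : Nat.find (d' (A' u)) < Nat.find (d' u) := find_step d' u hu0
        obtain ⟨n, hn⟩ := ih (Nat.find (d' (A' u))) (by omega) (A' u) rfl (by omega)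
        refine ⟨n + 1, ?_⟩
        rw [Function.iterate_succ_apply]
        have : ρ u = A' u := by
          rw [hρ, Function.update_of_ne huv, hagree u hlt]
        rw [this, hn]
  -- v reaches v₀ under ρ
  have hvreach : ∃ n : ℕ, ρ^[n] v = v₀ := by
    have hstep : Nat.find (d' (A' v)) < Nat.find (d' v) := find_step d' v hvv0
    obtain ⟨n, hn⟩ := claim1 _ (A' v) rfl hstep
    refine ⟨n + 1, ?_⟩
    rw [Function.iterate_succ_apply, hρ, Function.update_self, hn]
  -- every vertex reaches v₀ under ρ, by induction on A-depth
  have dA : ∀ u, ∃ n : ℕ, A^[n] u = v₀ := hA.2.2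
  have main : ∀ m, ∀ u, Nat.find (dA u) = m → ∃ n : ℕ, ρ^[n] u = v₀ := by
    intro m
    induction m using Nat.strong_induction_on with
    | _ m ih =>
      intro u hm
      by_cases huv : u = v
      · exact huv ▸ hvreach
      by_cases hu0 : u = v₀
      · exact ⟨0, hu0⟩
      · have hstep : Nat.find (dA (A u)) < Nat.find (dA u) := find_step dA u hu0
        obtain ⟨n, hn⟩ := ih (Nat.find (dA (A u))) (by omega) (A u) rfl
        refine ⟨n + 1, ?_⟩
        rw [Function.iterate_succ_apply, hρ, Function.update_of_ne huv, hn]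
  exact fun u => main (Nat.find (dA u)) u rfl

private lemma main_aux {V : Type} [Fintype V] [DecidableEq V]
    (D : V → V → Prop) (v₀ : V) (A' : V → V) (hA' : IsInArb D v₀ A') :
    ∀ (n : ℕ) (A : V → V), IsInArb D v₀ A →
      (filter (fun u => A u ≠ A' u) univ).card ≤ n →
      ∃ (k : ℕ) (s : ℕ → V → V), s 0 = A ∧ s k = A' ∧
        (∀ i ≤ k, IsInArb D v₀ (s i)) ∧
        ∀ i < k, ∃ w : V, ∀ v : V, v ≠ w → s i v = s (i + 1) v := by
  intro n
  induction n with
  | zero =>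
    intro A hA hcard
    have heq : A = A' := by
      funext u
      by_contra h
      have : u ∈ filter (fun u => A u ≠ A' u) univ := by
        simp [h]
      have := Finset.card_pos.mpr ⟨u, this⟩
      omega
    exact ⟨0, fun _ => A, rfl, heq ▸ rfl, fun i _ => hA, fun i hi => absurd hi (by omega)⟩
  | succ n ih =>
    intro A hA hcard
    by_cases heq : A = A'
    · exact ⟨0, fun _ => A, rfl, heq ▸ rfl, fun i _ => hA, fun i hi => absurd hi (by omega)⟩
    · -- pick v in the differing set with minimal A'-depth
      have hS : (filter (fun u => A u ≠ A' u) univ).Nonempty := by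
        rcases Function.ne_iff.mp heq with ⟨u, hu⟩
        exact ⟨u, by simp [hu]⟩
      obtain ⟨v, hvS, hmin⟩ := Finset.exists_min_image _
        (fun u => Nat.find (hA'.2.2 u)) hS
      have hv : A v ≠ A' v := by simpa using hvS
      have hvv0 : v ≠ v₀ := by
        intro h; subst h; exact hv (hA.1.trans hA'.1.symm)
      set ρ := Function.update A v (A' v) with hρ
      have hρarb : IsInArb D v₀ ρ := by
        refine ⟨?_, ?_, ?_⟩
        · rw [hρ, Function.update_of_ne (Ne.symm hvv0), hA.1]
        · intro u hu
          by_cases huv : u = v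
          · subst huv
            rw [hρ, Function.update_self]
            exact hA'.2.1 u hu
          · rw [hρ, Function.update_of_ne huv]
            exact hA.2.1 u hu
        · exact reach_of_swap D v₀ A A' hA hA' v hv
            (fun u hu => hmin u (by simp [hu]))
      have hset : filter (fun u => ρ u ≠ A' u) univ
          = (filter (fun u => A u ≠ A' u) univ).erase v := by
        ext u
        by_cases huv : u = v
        · subst huv
          simp [hρ, Function.update_self]
        · simp [hρ, Function.update_of_ne huv, huv]
      have hcard' : (filter (fun u => ρ u ≠ A' u) univ).card ≤ n := by
        rw [hset, Finset.card_erase_of_mem hvS]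
        omega
      obtain ⟨k, s, hs0, hsk, hall, hswap⟩ := ih ρ hρarb hcard'
      refine ⟨k + 1, fun i => match i with | 0 => A | j + 1 => s j, rfl, hsk, ?_, ?_⟩
      · intro i hi
        match i with
        | 0 => exact hA
        | j + 1 => exact hall j (by omega)
      · intro i hi
        match i with
        | 0 =>
          refine ⟨v, fun u hu => ?_⟩
          show A u = s 0 u
          rw [hs0, hρ, Function.update_of_ne hu]
        | j + 1 =>
          exact hswap j (by omega)

/-- any two in-arborescences rooted at `v₀` are connected by a sequence of
in-arborescences in which consecutive members differ by removing one edge and adding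
one edge (i.e. by changing the out-edge of a single vertex). -/
theorem arborescences_connected_by_single_swaps
    {V : Type} [Fintype V] [DecidableEq V]
    (D : V → V → Prop) (v₀ : V)
    (hconn : ∀ u v : V, Relation.ReflTransGen (fun a b => D a b) u v)
    (A A' : V → V)
    (hA : IsInArb D v₀ A) (hA' : IsInArb D v₀ A') :
    ∃ (k : ℕ) (s : ℕ → V → V), s 0 = A ∧ s k = A' ∧
      (∀ i ≤ k, IsInArb D v₀ (s i)) ∧
      ∀ i < k, ∃ w : V, ∀ v : V, v ≠ w → s i v = s (i + 1) v := by
  exact main_aux D v₀ A' hA' _ A hA le_rfl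
end

section
/- In the setting of Claim 6.4: let A and A' be two in-arborescences of a digraph D rooted at v₀, let W be the set of vertices whose out-edge differs between A and A', partially ordered by reachability in A (w₁ ≤ w₂ iff w₁ is reachable from w₂ on a directed path in A), and let w be a maximal element of W with out-edge wv in A and wv' in A'. Then A − wv + wv' is again an in-arborescence rooted at v₀. -/
open Finset

/-- If `x` lies on a cycle of `f` of positive length and reaches the fixed
point `v₀`, then `x = v₀`. -/
lemma eq_root_of_cycle {V : Type} (f : V → V) (v₀ x : V) (h0 : f v₀ = v₀)
    (k m : ℕ) (hk : 1 ≤ k) (hc : f^[k] x = x) (hm : f^[m] x = v₀) : x = v₀ := by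
  have hcycle : f^[k * m] x = x := by
    rw [Function.iterate_mul]
    exact Function.iterate_fixed hc m
  have hge : m ≤ k * m := Nat.le_mul_of_pos_left m hk
  have : f^[k * m] x = v₀ := by
    have : f^[(k * m - m) + m] x = v₀ := by
      rw [Function.iterate_add_apply, hm]
      exact Function.iterate_fixed h0 _
    rwa [Nat.sub_add_cancel hge] at this
  rw [hcycle] at this
  exact this

/-- let `W` be the set of vertices whose out-edge differs between the
in-arborescences `A` and `A'`, and let `w ∈ W` be maximal with respect to
reachability in `A`. Then replacing the out-edge of `w` in `A` by its out-edge in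
`A'` again yields an in-arborescence rooted at `v₀`. -/
theorem swap_at_maximal_vertex_is_arborescence
    {V : Type} [Fintype V] [DecidableEq V]
    (D : V → V → Prop) (v₀ : V)
    (A A' : V → V)
    (hA : IsInArb D v₀ A) (hA' : IsInArb D v₀ A')
    (w : V) (hw : A w ≠ A' w)
    (hmax : ∀ w' : V, A w' ≠ A' w' →
      (∃ n : ℕ, A^[n] w' = w) → (∃ n : ℕ, A^[n] w = w')) :
    IsInArb D v₀ (Function.update A w (A' w)) := by
  obtain ⟨hA0, hAe, hAr⟩ := hA
  obtain ⟨hA'0, hA'e, hA'r⟩ := hA'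
  have hw0 : w ≠ v₀ := by
    rintro rfl; exact hw (hA0.trans hA'0.symm)
  set B := Function.update A w (A' w) with hB
  have hBw : B w = A' w := Function.update_self w (A' w) A
  have hBother : ∀ v, v ≠ w → B v = A v := fun v hv => Function.update_of_ne hv _ _
  -- the A-path from A' w never returns to w
  have noreturn : ∀ n : ℕ, A^[n] (A' w) ≠ w := by
    intro n hn
    by_cases hW : ∃ i < n, A (A^[i] (A' w)) ≠ A' (A^[i] (A' w))
    · obtain ⟨i, hi, hne⟩ := hW
      set w' := A^[i] (A' w) with hw'
      have h1 : A^[n - i] w' = w := by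
        rw [hw', ← Function.iterate_add_apply, Nat.sub_add_cancel hi.le]
        exact hn
      obtain ⟨m, hm⟩ := hmax w' hne ⟨n - i, h1⟩
      have hcyc : A^[m + (n - i)] w' = w' := by
        rw [Function.iterate_add_apply, h1, hm]
      have hpos : 1 ≤ m + (n - i) := by omega
      obtain ⟨t, ht⟩ := hAr w'
      have : w' = v₀ := eq_root_of_cycle A v₀ w' hA0 _ t hpos hcyc ht
      -- w' = v₀ contradicts A w' ≠ A' w'
      rw [this, hA0, hA'0] at hne
      exact hne rfl
    · push_neg at hW
      -- all vertices on the path agree, so A' has a cycle through w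
      have key : ∀ i ≤ n, A'^[i + 1] w = A^[i] (A' w) := by
        intro i hi
        induction i with
        | zero => simp
        | succ j ih =>
          have hj : j ≤ n := by omega
          rw [Function.iterate_succ_apply', ih hj, Function.iterate_succ_apply',
            ← hW j (by omega)]
      have hcyc : A'^[n + 1] w = w := by rw [key n le_rfl]; exact hn
      obtain ⟨t, ht⟩ := hA'r w
      exact hw0 (eq_root_of_cycle A' v₀ w hA'0 _ t (by omega) hcyc ht)
  -- iterates of B starting at A' w agree with A
  have hagree : ∀ i : ℕ, B^[i] (A' w) = A^[i] (A' w) := by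
    intro i
    induction i with
    | zero => rfl
    | succ j ih =>
      rw [Function.iterate_succ_apply', Function.iterate_succ_apply', ih,
        hBother _ (noreturn j)]
  have hreachw : ∃ n, B^[n] w = v₀ := by
    obtain ⟨n, hn⟩ := hAr (A' w)
    exact ⟨n + 1, by rw [Function.iterate_succ_apply, hBw, hagree, hn]⟩
  refine ⟨hBother v₀ (Ne.symm hw0) ▸ hA0, ?_, ?_⟩
  · intro v hv
    by_cases hvw : v = w
    · subst hvw
      rw [hBw]
      exact hA'e v hv
    · rw [hBother v hvw]
      exact hAe v hv
  · intro v
    obtain ⟨n, hn⟩ := hAr v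
    induction n generalizing v with
    | zero => exact ⟨0, hn⟩
    | succ m ih =>
      by_cases hvw : v = w
      · exact hvw ▸ hreachw
      · obtain ⟨t, ht⟩ := ih (A v) (by rwa [← Function.iterate_succ_apply])
        exact ⟨t + 1, by rw [Function.iterate_succ_apply, hBother v hvw, ht]⟩
end

section
/- Let D_V be the balanced plane digraph of a trinity and let A be the free abelian group Z^{V ∪ E ∪ R}, with white-triangle equivalence ≈_W meaning that the difference of two elements is an integer linear combination of characteristic vectors of white triangles. If chip configurations x_V and y_V on V are linearly equivalent in D_V, then (x_V, 0, 0) ≈_W (y_V, 0, 0). -/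
open Finset

/-- A combinatorial trinity: a triangulation of the sphere `S²` whose `0`-simplices are
properly three-colored by `V` (violet), `E` (emerald) and `R` (red).  It is encoded by
its sets `Tw` of white and `Tb` of black triangles, the color of each corner of each
triangle, and the three edge-gluing bijections `σR`, `σE`, `σV` matching each white
triangle with the black triangle sharing its red (resp. emerald, violet) edge.  The
link conditions state that the triangles around each vertex form a single cycle, and
connectivity of the surface is required; the sphere (Euler) condition
`|V| + |E| + |R| = |Tw| + 2` appears as a hypothesis of the theorems. -/
structure Trinity (V E R Tw Tb : Type) where
  vw : Tw → V
  ew : Tw → E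
  rW : Tw → R
  vb : Tb → V
  eb : Tb → E
  rb : Tb → R
  σR : Tw ≃ Tb
  σE : Tw ≃ Tb
  σV : Tw ≃ Tb
  σR_v : ∀ t, vb (σR t) = vw t
  σR_e : ∀ t, eb (σR t) = ew t
  σE_v : ∀ t, vb (σE t) = vw t
  σE_r : ∀ t, rb (σE t) = rW t
  σV_e : ∀ t, eb (σV t) = ew t
  σV_r : ∀ t, rb (σV t) = rW t
  vsurj : Function.Surjective vw
  esurj : Function.Surjective ew
  rsurj : Function.Surjective rW
  linkV : ∀ t t' : Tw, vw t = vw t' →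
    Relation.ReflTransGen (fun a b => σR a = σE b) t t'
  linkE : ∀ t t' : Tw, ew t = ew t' →
    Relation.ReflTransGen (fun a b => σR a = σV b) t t'
  linkR : ∀ t t' : Tw, rW t = rW t' →
    Relation.ReflTransGen (fun a b => σE a = σV b) t t'
  conn : ∀ t t' : Tw, Relation.ReflTransGen (fun a b =>
    σR a = σE b ∨ σR a = σV b ∨ σE a = σR b ∨ σE a = σV b ∨ σV a = σR b ∨ σV a = σE b) t t'

namespace Trinity

variable {V E R Tw Tb : Type}

/-- The characteristic vector (in `ℤ^{V∪E∪R}`) of a white triangle. -/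
def chi [DecidableEq V] [DecidableEq E] [DecidableEq R]
    (S : Trinity V E R Tw Tb) (t : Tw) : (V → ℤ) × (E → ℤ) × (R → ℤ) :=
  (fun v => if S.vw t = v then 1 else 0,
   fun e => if S.ew t = e then 1 else 0,
   fun r => if S.rW t = r then 1 else 0)

/-- The Laplacian of the balanced plane digraph `D_V` applied to `z : V → ℤ`: for each
white triangle `t`, the corresponding edge of `D_V` points from the violet vertex of
the black triangle `σV t` to the violet vertex of `t` (they share their violet edge),
and firing moves one chip along each such edge. -/
def lapV [Fintype Tw] [DecidableEq V] (S : Trinity V E R Tw Tb) (z : V → ℤ) : V → ℤ :=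
  fun u => ∑ t : Tw, z (S.vb (S.σV t)) *
    ((if S.vw t = u then 1 else 0) - (if S.vb (S.σV t) = u then 1 else 0))

/-- Linear equivalence of chip configurations on `D_V`. -/
def linEqV [Fintype Tw] [DecidableEq V] (S : Trinity V E R Tw Tb) (x y : V → ℤ) : Prop :=
  ∃ z : V → ℤ, y = x + S.lapV z

/-- The Laplacian of the balanced plane digraph `D_E` applied to `z : E → ℤ`. -/
def lapE [Fintype Tw] [DecidableEq E] (S : Trinity V E R Tw Tb) (z : E → ℤ) : E → ℤ :=
  fun u => ∑ t : Tw, z (S.eb (S.σE t)) *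
    ((if S.ew t = u then 1 else 0) - (if S.eb (S.σE t) = u then 1 else 0))

/-- Linear equivalence of chip configurations on `D_E`. -/
def linEqE [Fintype Tw] [DecidableEq E] (S : Trinity V E R Tw Tb) (x y : E → ℤ) : Prop :=
  ∃ z : E → ℤ, y = x + S.lapE z

/-- The red graph `G_R`: the bipartite graph on `V ∪ E` formed by the red edges (the
support simple graph; each red edge lies in a unique white triangle). -/
def SR (S : Trinity V E R Tw Tb) : SimpleGraph (V ⊕ E) where
  Adj a b := ∃ t : Tw, (a = Sum.inl (S.vw t) ∧ b = Sum.inr (S.ew t)) ∨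
    (b = Sum.inl (S.vw t) ∧ a = Sum.inr (S.ew t))
  symm := by
    constructor
    rintro a b ⟨t, h | h⟩
    exacts [⟨t, Or.inr h⟩, ⟨t, Or.inl h⟩]
  loopless := by
    constructor
    rintro a ⟨t, ⟨h1, h2⟩ | ⟨h1, h2⟩⟩ <;> subst h1 <;> simp at h2

/-- The violet graph `G_V`: the bipartite graph on `R ∪ E` formed by the violet edges. -/
def SV (S : Trinity V E R Tw Tb) : SimpleGraph (R ⊕ E) where
  Adj a b := ∃ t : Tw, (a = Sum.inl (S.rW t) ∧ b = Sum.inr (S.ew t)) ∨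
    (b = Sum.inl (S.rW t) ∧ a = Sum.inr (S.ew t))
  symm := by
    constructor
    rintro a b ⟨t, h | h⟩
    exacts [⟨t, Or.inr h⟩, ⟨t, Or.inl h⟩]
  loopless := by
    constructor
    rintro a ⟨t, ⟨h1, h2⟩ | ⟨h1, h2⟩⟩ <;> subst h1 <;> simp at h2

/-- `f : E → ℤ` is a hypertree of the red graph `G_R` on `E`. -/
def hypertreeRE (S : Trinity V E R Tw Tb) (f : E → ℤ) : Prop :=
  ∃ T : SimpleGraph (V ⊕ E), T ≤ S.SR ∧ T.IsTree ∧
    ∀ e : E, ((T.neighborSet (Sum.inr e)).ncard : ℤ) = f e + 1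

/-- `f : E → ℤ` is a hypertree of the violet graph `G_V` on `E`. -/
def hypertreeVE (S : Trinity V E R Tw Tb) (f : E → ℤ) : Prop :=
  ∃ T : SimpleGraph (R ⊕ E), T ≤ S.SV ∧ T.IsTree ∧
    ∀ e : E, ((T.neighborSet (Sum.inr e)).ncard : ℤ) = f e + 1

/-- `f : V → ℤ` is a hypertree of the red graph `G_R` on `V`. -/
def hypertreeRV (S : Trinity V E R Tw Tb) (f : V → ℤ) : Prop :=
  ∃ T : SimpleGraph (V ⊕ E), T ≤ S.SR ∧ T.IsTree ∧
    ∀ v : V, ((T.neighborSet (Sum.inl v)).ncard : ℤ) = f v + 1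

/-- The common degree `d(e) = d_{G_R}(e) = d_{G_V}(e)` of an emerald vertex, i.e. the
number of white triangles at `e`. -/
noncomputable def dE (S : Trinity V E R Tw Tb) (e : E) : ℤ := (({t : Tw | S.ew t = e}).ncard : ℤ)

end Trinity

/-!
Fire with `z` and give the white triangle `t` the coefficient `z v' - z v`, where `v = vw t` and
`v'` is the violet corner of the black triangle `σV t` across its violet edge. Every black
triangle is `σV t`, `σR t` and `σE t` for exactly one white `t` each, and `σR t` (resp. `σE t`)
shares with `t` its violet and emerald (resp. violet and red) corners. Reindexing the black
triangles along these bijections cancels the emerald and red components of `∑ z v' • χ t`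
against those of `∑ z v • χ t`, and turns the violet component into the Laplacian of `z`.
-/

namespace Trinity

variable {V E R Tw Tb : Type} [Fintype Tw] (S : Trinity V E R Tw Tb)
  {M : Type*} [AddCommMonoid M]

theorem sum_vb_σV_ew_eq (g : V → E → M) :
    ∑ t, g (S.vb (S.σV t)) (S.ew t) = ∑ t, g (S.vw t) (S.ew t) :=
  Fintype.sum_equiv (S.σV.trans S.σR.symm) _ _ fun t => by
    have hv := S.σR_v (S.σR.symm (S.σV t))
    have he := S.σR_e (S.σR.symm (S.σV t))
    simp only [Equiv.apply_symm_apply, S.σV_e] at hv he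
    simp [hv, he]

theorem sum_vb_σV_rW_eq (g : V → R → M) :
    ∑ t, g (S.vb (S.σV t)) (S.rW t) = ∑ t, g (S.vw t) (S.rW t) :=
  Fintype.sum_equiv (S.σV.trans S.σE.symm) _ _ fun t => by
    have hv := S.σE_v (S.σE.symm (S.σV t))
    have hr := S.σE_r (S.σE.symm (S.σV t))
    simp only [Equiv.apply_symm_apply, S.σV_r] at hv hr
    simp [hv, hr]

theorem sum_vb_σV_eq (g : V → M) : ∑ t, g (S.vb (S.σV t)) = ∑ t, g (S.vw t) :=
  S.sum_vb_σV_ew_eq fun v _ => g v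

variable [DecidableEq V] [DecidableEq E] [DecidableEq R]

theorem lapV_eq_sum_smul_chi (z : V → ℤ) :
    ((S.lapV z, 0, 0) : (V → ℤ) × (E → ℤ) × (R → ℤ)) =
      ∑ t, (z (S.vb (S.σV t)) - z (S.vw t)) • S.chi t := by
  refine Prod.ext ?_ (Prod.ext ?_ ?_) <;> funext a <;>
    simp only [Prod.fst_sum, Prod.snd_sum, Finset.sum_apply, Prod.smul_fst, Prod.smul_snd,
      Pi.smul_apply, smul_eq_mul, chi, Pi.zero_apply, sub_mul, Finset.sum_sub_distrib]
  · have hfire := S.sum_vb_σV_eq fun v => z v * if v = a then 1 else 0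
    simp only [lapV, mul_sub, Finset.sum_sub_distrib, hfire]
  · rw [S.sum_vb_σV_ew_eq fun v e => z v * if e = a then 1 else 0, sub_self]
  · rw [S.sum_vb_σV_rW_eq fun v r => z v * if r = a then 1 else 0, sub_self]

end Trinity

theorem lin_equiv_implies_white_triangle_equiv_general
    {V E R Tw Tb : Type} [Fintype Tw]
    [DecidableEq V] [DecidableEq E] [DecidableEq R]
    (S : Trinity V E R Tw Tb)
    (x y : V → ℤ) (hxy : S.linEqV x y) :
    ∃ c : Tw → ℤ,
      ((y - x, 0, 0) : (V → ℤ) × (E → ℤ) × (R → ℤ)) = ∑ t : Tw, c t • S.chi t := by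
  obtain ⟨z, rfl⟩ := hxy
  exact ⟨_, by rw [add_sub_cancel_left]; exact S.lapV_eq_sum_smul_chi z⟩

/-- Lemma 3.2: if the chip configurations `x` and `y` on `V` are
linearly equivalent in `D_V`, then `(x, 0, 0)` and `(y, 0, 0)` are white-triangle
equivalent, i.e. their difference is an integer linear combination of characteristic
vectors of white triangles. -/
theorem lin_equiv_implies_white_triangle_equiv
    {V E R Tw Tb : Type} [Fintype V] [Fintype E] [Fintype R] [Fintype Tw]
    [DecidableEq V] [DecidableEq E] [DecidableEq R]
    (S : Trinity V E R Tw Tb)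
    (heuler : Fintype.card V + Fintype.card E + Fintype.card R = Fintype.card Tw + 2)
    (x y : V → ℤ) (hxy : S.linEqV x y) :
    ∃ c : Tw → ℤ,
      ((y - x, 0, 0) : (V → ℤ) × (E → ℤ) × (R → ℤ)) = ∑ t : Tw, c t • S.chi t :=
  lin_equiv_implies_white_triangle_equiv_general S x y hxy
end

section
/- With notation as in Lemma 3.2: if (x_V, 0, 0) ≈_W (y_V, 0, 0), i.e., (y_V − x_V, 0, 0) is an integer linear combination of characteristic vectors of white triangles of the trinity, then x_V and y_V are linearly equivalent chip configurations on the digraph D_V. -/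
open Finset

/-!
A combination `c` of white triangles whose emerald and red parts vanish lies in the kernel of
the incidence matrix of the bipartite graph on `E ∪ R` whose edges are the white triangles.
That kernel contains the gradients `t ↦ z (vw (rotE t)) - z (vw t)` of potentials `z` on `V`,
because `rotE` permutes the white triangles around each emerald vertex and, up to the same
violet vertex, `rotR` does so around each red vertex. Connectivity of the trinity makes the
kernel of the gradient and the cokernel of the incidence matrix one-dimensional, so Euler's
formula gives both spaces the dimension `|V| - 1 = |Tw| + 1 - |E| - |R|`, and `c` is the
gradient of a rational potential. Its fractional part is constant, so its floor is an integer
potential `w` with gradient `c`, and firing `w` on `D_V` produces exactly `y - x`.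
-/

open Relation Matrix

theorem Relation.ReflTransGen.apply_eq {α β : Type*} {r : α → α → Prop} {f : α → β}
    (hf : ∀ a b, r a b → f a = f b) {a b : α} (h : ReflTransGen r a b) : f a = f b := by
  induction h with
  | refl => rfl
  | tail _ hbc ih => exact ih.trans (hf _ _ hbc)

theorem Finset.sum_filter_sub_comp_perm_eq_zero {T A M : Type*} [Fintype T] [DecidableEq A]
    [AddCommGroup M] (σ : Equiv.Perm T) {p : T → A} (hp : ∀ t, p (σ t) = p t) (h : T → M)
    (a : A) : ∑ t with p t = a, (h (σ t) - h t) = 0 := by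
  rw [sum_sub_distrib, sub_eq_zero, sum_filter, sum_filter,
    ← Equiv.sum_comp σ fun s => if p s = a then h s else 0]
  simp only [hp]

theorem finrank_le_one_of_le_span_singleton {K M : Type*} [Field K] [AddCommGroup M]
    [Module K M] {p : Submodule K M} {v : M} (h : p ≤ K ∙ v) : Module.finrank K p ≤ 1 :=
  (Submodule.finrank_mono h).trans <| by simpa using finrank_span_le_card ({v} : Set M)

namespace Trinity

variable {V E R Tw Tb : Type} (S : Trinity V E R Tw Tb)

/-- Crossing the violet edge of `t` and then the red edge of the black triangle reached
turns `t` around its emerald vertex; `rotR` crosses the emerald edge instead and turns `t`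
around its red vertex. -/
def rotE : Equiv.Perm Tw := S.σV.trans S.σR.symm

def rotR : Equiv.Perm Tw := S.σV.trans S.σE.symm

lemma rotE_eq_iff {t s : Tw} : S.rotE t = s ↔ S.σV t = S.σR s := Equiv.symm_apply_eq _

lemma rotR_eq_iff {t s : Tw} : S.rotR t = s ↔ S.σV t = S.σE s := Equiv.symm_apply_eq _

@[simp]
lemma σR_rotE (t : Tw) : S.σR (S.rotE t) = S.σV t := (S.rotE_eq_iff.1 rfl).symm

@[simp]
lemma σE_rotR (t : Tw) : S.σE (S.rotR t) = S.σV t := (S.rotR_eq_iff.1 rfl).symm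

lemma ew_rotE (t : Tw) : S.ew (S.rotE t) = S.ew t := by
  rw [← S.σR_e, σR_rotE, S.σV_e]

lemma rW_rotR (t : Tw) : S.rW (S.rotR t) = S.rW t := by
  rw [← S.σE_r, σE_rotR, S.σV_r]

lemma vw_rotE (t : Tw) : S.vw (S.rotE t) = S.vb (S.σV t) := by
  rw [← S.σR_v, σR_rotE]

lemma vw_rotR (t : Tw) : S.vw (S.rotR t) = S.vb (S.σV t) := by
  rw [← S.σE_v, σE_rotR]

theorem apply_eq_of_vw_rotE {β : Type*} (g : V → β)
    (hg : ∀ t, g (S.vw (S.rotE t)) = g (S.vw t)) (u v : V) : g u = g v := by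
  obtain ⟨a, rfl⟩ := S.vsurj u
  obtain ⟨b, rfl⟩ := S.vsurj v
  have hgR : ∀ t, g (S.vw (S.rotR t)) = g (S.vw t) := fun t => by
    rw [vw_rotR, ← vw_rotE, hg]
  refine (S.conn a b).apply_eq (f := g ∘ S.vw) fun a b h => ?_
  simp only [Function.comp_apply]
  rcases h with h | h | h | h | h | h
  · rw [← S.σR_v, h, S.σE_v]
  · rw [← S.rotE_eq_iff.2 h.symm, hg]
  · rw [← S.σE_v, h, S.σR_v]
  · rw [← S.rotR_eq_iff.2 h.symm, hgR]
  · rw [← S.rotE_eq_iff.2 h, hg]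
  · rw [← S.rotR_eq_iff.2 h, hgR]

lemma exists_ew_rW_of_σR_eq_σE {a b : Tw} (h : S.σR a = S.σE b) :
    ∃ t, S.ew t = S.ew a ∧ S.rW t = S.rW b :=
  ⟨S.σV.symm (S.σR a), by rw [← S.σV_e, Equiv.apply_symm_apply, S.σR_e],
    by rw [← S.σV_r, Equiv.apply_symm_apply, h, S.σE_r]⟩

theorem apply_eq_of_rW_eq {β : Type*} (g : E → β)
    (hg : ∀ a b, S.rW a = S.rW b → g (S.ew a) = g (S.ew b)) (e e' : E) : g e = g e' := by
  obtain ⟨a, rfl⟩ := S.esurj e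
  obtain ⟨b, rfl⟩ := S.esurj e'
  have hstep : ∀ a b, S.ew a = S.ew b ∨ S.rW a = S.rW b → g (S.ew a) = g (S.ew b) := by
    rintro a b (h | h)
    exacts [congrArg g h, hg a b h]
  refine (S.conn a b).apply_eq (f := g ∘ S.ew) fun a b h => ?_
  simp only [Function.comp_apply]
  rcases h with h | h | h | h | h | h
  · obtain ⟨t, hta, htb⟩ := S.exists_ew_rW_of_σR_eq_σE h
    rw [← hta, hstep t b (Or.inr htb)]
  · exact hstep a b (Or.inl (by rw [← S.σR_e, h, S.σV_e]))
  · obtain ⟨t, htb, hta⟩ := S.exists_ew_rW_of_σR_eq_σE h.symm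
    rw [← htb, hstep a t (Or.inr hta.symm)]
  · exact hstep a b (Or.inr (by rw [← S.σE_r, h, S.σV_r]))
  · exact hstep a b (Or.inl (by rw [← S.σV_e, h, S.σR_e]))
  · exact hstep a b (Or.inr (by rw [← S.σV_r, h, S.σE_r]))

section CommRing

variable (K : Type*) [CommRing K]

def gradV : (V → K) →ₗ[K] Tw → K :=
  LinearMap.funLeft K K (S.vw ∘ S.rotE) - LinearMap.funLeft K K S.vw

@[simp]
lemma gradV_apply (z : V → K) (t : Tw) : S.gradV K z t = z (S.vw (S.rotE t)) - z (S.vw t) :=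
  rfl

lemma gradV_apply_eq_rotR (z : V → K) (t : Tw) :
    S.gradV K z t = z (S.vw (S.rotR t)) - z (S.vw t) := by
  rw [gradV_apply, vw_rotE, vw_rotR]

lemma ker_gradV_le : LinearMap.ker (S.gradV K) ≤ K ∙ 1 := by
  intro z hz
  have hconst := S.apply_eq_of_vw_rotE z fun t => sub_eq_zero.1 (congrFun hz t)
  rcases isEmpty_or_nonempty V with hV | ⟨⟨v₀⟩⟩
  · exact Submodule.mem_span_singleton.2 ⟨0, Subsingleton.elim _ _⟩
  · exact Submodule.mem_span_singleton.2 ⟨z v₀, funext fun v => by simp [hconst v₀ v]⟩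

variable [DecidableEq E] [DecidableEq R]

def incidenceER : Matrix (E ⊕ R) Tw K :=
  Matrix.of fun i t =>
    Sum.elim (fun e => if S.ew t = e then 1 else 0) (fun r => if S.rW t = r then 1 else 0) i

section Transpose

variable [Fintype E] [Fintype R]

lemma incidenceER_transpose_mulVec (f : E ⊕ R → K) (t : Tw) :
    ((S.incidenceER K)ᵀ *ᵥ f) t = f (Sum.inl (S.ew t)) + f (Sum.inr (S.rW t)) := by
  simp [incidenceER, mulVec, dotProduct, Fintype.sum_sum_type]

lemma ker_incidenceER_transpose_le :
    LinearMap.ker (S.incidenceER K)ᵀ.mulVecLin ≤ K ∙ (Sum.elim 1 (-1) : E ⊕ R → K) := by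
  intro f hf
  have hf' : ∀ t, f (Sum.inl (S.ew t)) = -f (Sum.inr (S.rW t)) := fun t => by
    have := congrFun (LinearMap.mem_ker.1 hf) t
    rw [mulVecLin_apply, incidenceER_transpose_mulVec] at this
    exact eq_neg_of_add_eq_zero_left this
  have hconst := S.apply_eq_of_rW_eq (f ∘ Sum.inl) fun a b h => by simp [hf', h]
  rcases isEmpty_or_nonempty E with hE | ⟨⟨e₀⟩⟩
  · have : IsEmpty R := ⟨fun r => isEmptyElim (S.ew (S.rsurj r).choose)⟩
    exact Submodule.mem_span_singleton.2 ⟨0, Subsingleton.elim _ _⟩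
  · refine Submodule.mem_span_singleton.2 ⟨f (Sum.inl e₀), funext ?_⟩
    rintro (e | r)
    · simpa using hconst e₀ e
    · obtain ⟨t, rfl⟩ := S.rsurj r
      have := hconst e₀ (S.ew t)
      simp only [Function.comp_apply, hf'] at this
      simp [this]

end Transpose

variable [Fintype Tw]

lemma incidenceER_mulVec_inl (c : Tw → K) (e : E) :
    (S.incidenceER K *ᵥ c) (Sum.inl e) = ∑ t with S.ew t = e, c t := by
  simp [incidenceER, mulVec, dotProduct, sum_filter]

lemma incidenceER_mulVec_inr (c : Tw → K) (r : R) :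
    (S.incidenceER K *ᵥ c) (Sum.inr r) = ∑ t with S.rW t = r, c t := by
  simp [incidenceER, mulVec, dotProduct, sum_filter]

lemma range_gradV_le_ker_incidenceER :
    LinearMap.range (S.gradV K) ≤ LinearMap.ker (S.incidenceER K).mulVecLin := by
  rintro _ ⟨z, rfl⟩
  refine LinearMap.mem_ker.2 (funext ?_)
  rintro (e | r)
  · rw [mulVecLin_apply, incidenceER_mulVec_inl]
    exact sum_filter_sub_comp_perm_eq_zero S.rotE S.ew_rotE (z ∘ S.vw) e
  · rw [mulVecLin_apply, incidenceER_mulVec_inr]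
    simp_rw [gradV_apply_eq_rotR]
    exact sum_filter_sub_comp_perm_eq_zero S.rotR S.rW_rotR (z ∘ S.vw) r

lemma intCast_mem_ker_incidenceER {c : Tw → ℤ} (hE : ∀ e, ∑ t with S.ew t = e, c t = 0)
    (hR : ∀ r, ∑ t with S.rW t = r, c t = 0) :
    (fun t => (c t : K)) ∈ LinearMap.ker (S.incidenceER K).mulVecLin := by
  refine LinearMap.mem_ker.2 (funext ?_)
  rintro (e | r)
  · rw [mulVecLin_apply, incidenceER_mulVec_inl, ← Int.cast_sum, hE, Int.cast_zero,
      Pi.zero_apply]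
  · rw [mulVecLin_apply, incidenceER_mulVec_inr, ← Int.cast_sum, hR, Int.cast_zero,
      Pi.zero_apply]

end CommRing

section Field

variable (K : Type*) [Field K]

lemma card_le_finrank_range_gradV [Fintype V] :
    Fintype.card V ≤ Module.finrank K (LinearMap.range (S.gradV K)) + 1 := by
  have hrank := (S.gradV K).finrank_range_add_finrank_ker
  have hker := finrank_le_one_of_le_span_singleton (S.ker_gradV_le K)
  rw [Module.finrank_fintype_fun_eq_card] at hrank
  omega

variable [Fintype Tw] [Fintype E] [Fintype R] [DecidableEq E] [DecidableEq R]

lemma finrank_ker_incidenceER_le :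
    Module.finrank K (LinearMap.ker (S.incidenceER K).mulVecLin)
      + Fintype.card E + Fintype.card R ≤ Fintype.card Tw + 1 := by
  have hrank := (S.incidenceER K).mulVecLin.finrank_range_add_finrank_ker
  have hrankT := (S.incidenceER K)ᵀ.mulVecLin.finrank_range_add_finrank_ker
  have hkerT := finrank_le_one_of_le_span_singleton (S.ker_incidenceER_transpose_le K)
  have htranspose := (S.incidenceER K).rank_transpose
  simp only [Matrix.rank, Module.finrank_fintype_fun_eq_card, Fintype.card_sum] at *
  omega

theorem ker_incidenceER_eq_range_gradV [Fintype V]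
    (heuler : Fintype.card Tw + 2 ≤ Fintype.card V + Fintype.card E + Fintype.card R) :
    LinearMap.ker (S.incidenceER K).mulVecLin = LinearMap.range (S.gradV K) := by
  refine (Submodule.eq_of_le_of_finrank_le (S.range_gradV_le_ker_incidenceER K) ?_).symm
  have := S.card_le_finrank_range_gradV K
  have := S.finrank_ker_incidenceER_le K
  omega

end Field

theorem exists_gradV_int_eq {z : V → ℚ} {c : Tw → ℤ} (hz : S.gradV ℚ z = fun t => (c t : ℚ)) :
    ∃ w : V → ℤ, S.gradV ℤ w = c := by
  have hfract := S.apply_eq_of_vw_rotE (Int.fract ∘ z) fun t =>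
    Int.fract_eq_fract.2 ⟨c t, congrFun hz t⟩
  refine ⟨fun v => ⌊z v⌋, funext fun t => ?_⟩
  have hct := congrFun hz t
  have h₁ := Int.floor_add_fract (z (S.vw (S.rotE t)))
  have h₂ := Int.floor_add_fract (z (S.vw t))
  have h₃ := hfract (S.vw (S.rotE t)) (S.vw t)
  simp only [gradV_apply, Function.comp_apply] at hct h₃ ⊢
  exact_mod_cast (by linarith : (⌊z (S.vw (S.rotE t))⌋ - ⌊z (S.vw t)⌋ : ℚ) = c t)

variable [Fintype Tw]

lemma lapV_eq_sum_gradV [DecidableEq V] (w : V → ℤ) (u : V) :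
    S.lapV w u = ∑ t with S.vw t = u, S.gradV ℤ w t := by
  have hshift : ∑ t, w (S.vw (S.rotE t)) * (if S.vw (S.rotE t) = u then 1 else 0)
      = ∑ t, w (S.vw t) * (if S.vw t = u then 1 else 0) :=
    Equiv.sum_comp S.rotE fun s => w (S.vw s) * if S.vw s = u then 1 else 0
  simp only [lapV, ← vw_rotE, mul_sub, sum_sub_distrib]
  rw [hshift, ← sum_sub_distrib, sum_filter]
  refine sum_congr rfl fun t _ => ?_
  split_ifs <;> simp

lemma sum_smul_chi [DecidableEq V] [DecidableEq E] [DecidableEq R] (c : Tw → ℤ) :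
    ∑ t, c t • S.chi t = (fun v => ∑ t with S.vw t = v, c t,
      fun e => ∑ t with S.ew t = e, c t, fun r => ∑ t with S.rW t = r, c t) := by
  ext <;> simp [chi, Prod.fst_sum, Prod.snd_sum, sum_filter]

end Trinity

/-- Lemma 3.3: if `(y − x, 0, 0)` is an integer linear combination of
characteristic vectors of white triangles of the trinity, then the chip
configurations `x` and `y` are linearly equivalent on the digraph `D_V`. -/
theorem white_triangle_equiv_implies_lin_equiv
    {V E R Tw Tb : Type} [Fintype V] [Fintype E] [Fintype R] [Fintype Tw]
    [DecidableEq V] [DecidableEq E] [DecidableEq R]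
    (S : Trinity V E R Tw Tb)
    (heuler : Fintype.card V + Fintype.card E + Fintype.card R = Fintype.card Tw + 2)
    (x y : V → ℤ)
    (hW : ∃ c : Tw → ℤ,
      ((y - x, 0, 0) : (V → ℤ) × (E → ℤ) × (R → ℤ)) = ∑ t : Tw, c t • S.chi t) :
    S.linEqV x y := by
  obtain ⟨c, hc⟩ := hW
  simp only [S.sum_smul_chi, Prod.mk.injEq] at hc
  obtain ⟨hV, hE, hR⟩ := hc
  have hker := S.intCast_mem_ker_incidenceER ℚ (fun e => (congrFun hE e).symm)
    (fun r => (congrFun hR r).symm)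
  rw [S.ker_incidenceER_eq_range_gradV ℚ heuler.ge] at hker
  obtain ⟨z, hz⟩ := hker
  obtain ⟨w, rfl⟩ := S.exists_gradV_int_eq hz
  refine ⟨w, funext fun u => ?_⟩
  rw [Pi.add_apply, S.lapV_eq_sum_gradV, ← congrFun hV u, Pi.sub_apply]
  ring
end

section
/- For every degree-zero chip configuration x on V in a trinity, there exists a degree-zero chip configuration y on E such that (x, 0, 0) ≈_W (0, −y, 0), i.e., (x, y, 0) is an integer linear combination of characteristic vectors of white triangles. -/
open Finset

/-!
Two white triangles with the same red vertex differ by a vector of `ℤ^{V∪E∪R}` with no red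
part and violet part `δ_v - δ_v'`; two with the same violet vertex have equal violet parts.
Connectivity of the surface links any two white triangles by such steps. Hence every
`δ_v - δ_w`, and so every degree-zero `x`, is the violet part of a red-free integer
combination of white triangles. Its emerald part has degree zero, since each white triangle has exactly one
violet and one emerald vertex.
-/

theorem Submodule.mem_of_sum_eq_zero_of_single_sub_single_mem {ι K : Type*} [Fintype ι]
    [DecidableEq ι] [CommRing K] {M : Submodule K (ι → K)}
    (hM : ∀ i j, Pi.single i 1 - Pi.single j 1 ∈ M) {x : ι → K} (hx : ∑ i, x i = 0) :
    x ∈ M := by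
  rcases isEmpty_or_nonempty ι with _ | ⟨⟨i₀⟩⟩
  · simp [Subsingleton.elim x 0]
  have hx_eq : x = ∑ i, x i • (Pi.single i 1 - Pi.single i₀ 1 : ι → K) := by
    simp only [smul_sub, Finset.sum_sub_distrib, ← Finset.sum_smul, hx, zero_smul, sub_zero]
    ext j
    simp [Pi.single_apply]
  rw [hx_eq]
  exact M.sum_mem fun i _ => M.smul_mem _ (hM i i₀)

namespace Trinity

variable {V E R Tw Tb : Type} (S : Trinity V E R Tw Tb)

def SharesVioletOrRed (a b : Tw) : Prop := S.vw a = S.vw b ∨ S.rW a = S.rW b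

/-- The white triangle `σE⁻¹ (σR a)` shares its violet vertex with `a` and its red vertex
with `b`. -/
theorem reflTransGen_sharesVioletOrRed_of_σR_eq_σV {a b : Tw} (h : S.σR a = S.σV b) :
    Relation.ReflTransGen S.SharesVioletOrRed a b := by
  set c := S.σE.symm (S.σR a)
  have hc : S.σE c = S.σR a := S.σE.apply_symm_apply _
  have hac : S.vw a = S.vw c := by rw [← S.σR_v a, ← hc, S.σE_v]
  have hcb : S.rW c = S.rW b := by rw [← S.σE_r c, hc, h, S.σV_r]
  exact .head (Or.inl hac) (.single (Or.inr hcb))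

instance : Std.Symm S.SharesVioletOrRed := ⟨fun _ _ h => h.imp Eq.symm Eq.symm⟩

theorem reflTransGen_sharesVioletOrRed (t t' : Tw) :
    Relation.ReflTransGen S.SharesVioletOrRed t t' := by
  induction S.conn t t' with
  | refl => exact .refl
  | tail _ hstep ih =>
    refine ih.trans ?_
    rcases hstep with h | h | h | h | h | h
    · exact .single (Or.inl (by rw [← S.σR_v, h, S.σE_v]))
    · exact S.reflTransGen_sharesVioletOrRed_of_σR_eq_σV h
    · exact .single (Or.inl (by rw [← S.σE_v, h, S.σR_v]))
    · exact .single (Or.inr (by rw [← S.σE_r, h, S.σV_r]))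
    · exact Std.Symm.symm _ _ (S.reflTransGen_sharesVioletOrRed_of_σR_eq_σV h.symm)
    · exact .single (Or.inr (by rw [← S.σV_r, h, S.σE_r]))

variable [DecidableEq V] [DecidableEq E] [DecidableEq R]

theorem chi_fst (t : Tw) : (S.chi t).1 = Pi.single (S.vw t) 1 := by
  ext v
  simp [chi, Pi.single_apply, eq_comm]

def whiteLattice : Submodule ℤ ((V → ℤ) × (E → ℤ) × (R → ℤ)) :=
  Submodule.span ℤ (Set.range S.chi)

theorem sum_fst_eq_sum_snd_fst_of_mem_whiteLattice [Fintype V] [Fintype E]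
    {p : (V → ℤ) × (E → ℤ) × (R → ℤ)} (hp : p ∈ S.whiteLattice) :
    ∑ v, p.1 v = ∑ e, p.2.1 e := by
  induction hp using Submodule.span_induction with
  | mem _ h =>
    obtain ⟨t, rfl⟩ := h
    simp [chi]
  | zero => simp
  | add _ _ _ _ hp hq => simp [Finset.sum_add_distrib, hp, hq]
  | smul _ _ _ hp => simp [← Finset.mul_sum, hp]

def redFreeViolet : Submodule ℤ (V → ℤ) :=
  (S.whiteLattice ⊓ LinearMap.ker ((LinearMap.snd ℤ _ _).comp (LinearMap.snd ℤ _ _))).map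
    (LinearMap.fst ℤ (V → ℤ) ((E → ℤ) × (R → ℤ)))

theorem single_sub_single_mem_redFreeViolet (t t' : Tw) :
    Pi.single (S.vw t) 1 - Pi.single (S.vw t') 1 ∈ S.redFreeViolet := by
  induction S.reflTransGen_sharesVioletOrRed t t' with
  | refl => simp
  | @tail b c _ hstep ih =>
    rcases hstep with hv | hr
    · rwa [← hv]
    have hbc : S.chi b - S.chi c ∈ S.whiteLattice ⊓ LinearMap.ker
        ((LinearMap.snd ℤ _ _).comp (LinearMap.snd ℤ _ _)) :=
      ⟨sub_mem (Submodule.subset_span ⟨b, rfl⟩) (Submodule.subset_span ⟨c, rfl⟩), by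
        ext r; simp [chi, hr]⟩
    simpa [chi_fst] using S.redFreeViolet.add_mem ih ⟨_, hbc, rfl⟩

end Trinity

theorem exists_emerald_partner_general
    {V E R Tw Tb : Type} [Fintype V] [Fintype E] [Fintype Tw]
    [DecidableEq V] [DecidableEq E] [DecidableEq R]
    (S : Trinity V E R Tw Tb)
    (x : V → ℤ) (hx : ∑ v, x v = 0) :
    ∃ y : E → ℤ, ∑ e, y e = 0 ∧
      ∃ c : Tw → ℤ,
        ((x, y, 0) : (V → ℤ) × (E → ℤ) × (R → ℤ)) = ∑ t : Tw, c t • S.chi t := by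
  have hsingle (v w : V) : Pi.single v 1 - Pi.single w 1 ∈ S.redFreeViolet := by
    obtain ⟨t, rfl⟩ := S.vsurj v
    obtain ⟨t', rfl⟩ := S.vsurj w
    exact S.single_sub_single_mem_redFreeViolet t t'
  obtain ⟨p, ⟨hp, hred⟩, rfl⟩ :=
    Submodule.mem_of_sum_eq_zero_of_single_sub_single_mem hsingle hx
  refine ⟨p.2.1, (S.sum_fst_eq_sum_snd_fst_of_mem_whiteLattice hp).symm.trans hx, ?_⟩
  obtain ⟨c, hc⟩ := (Submodule.mem_span_range_iff_exists_fun ℤ).mp hp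
  refine ⟨c, ?_⟩
  rw [hc]
  exact Prod.ext rfl (Prod.ext rfl hred.symm)

/-- for every degree-zero chip configuration `x` on `V` there is a
degree-zero chip configuration `y` on `E` with `(x, 0, 0) ≈_W (0, −y, 0)`, i.e.
`(x, y, 0)` is an integer linear combination of characteristic vectors of white
triangles. -/
theorem exists_emerald_partner
    {V E R Tw Tb : Type} [Fintype V] [Fintype E] [Fintype R] [Fintype Tw]
    [DecidableEq V] [DecidableEq E] [DecidableEq R]
    (S : Trinity V E R Tw Tb)
    (heuler : Fintype.card V + Fintype.card E + Fintype.card R = Fintype.card Tw + 2)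
    (x : V → ℤ) (hx : ∑ v, x v = 0) :
    ∃ y : E → ℤ, ∑ e, y e = 0 ∧
      ∃ c : Tw → ℤ,
        ((x, y, 0) : (V → ℤ) × (E → ℤ) × (R → ℤ)) = ∑ t : Tw, c t • S.chi t :=
  exists_emerald_partner_general S x hx
end

section
/- The map φ_{V→E}: Pic^0(D_V) → Pic^0(D_E) defined by φ_{V→E}([x]) = [y] whenever (x, 0, 0) ≈_W (0, −y, 0) is a well-defined group isomorphism between the sandpile groups of D_V and D_E. -/
open Finset

/-- The graph of the map `φ_{V→E}` on representatives: `P x y` holds iff `x` and `y`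
are degree-zero chip configurations on `V` resp. `E` with
`(x, 0, 0) ≈_W (0, −y, 0)`, i.e. `(x, y, 0)` is an integer combination of white
triangles. -/
def phiRel {V E R Tw Tb : Type} [Fintype V] [Fintype E] [Fintype Tw]
    [DecidableEq V] [DecidableEq E] [DecidableEq R]
    (S : Trinity V E R Tw Tb) (x : V → ℤ) (y : E → ℤ) : Prop :=
  (∑ v, x v = 0) ∧ (∑ e, y e = 0) ∧
    ∃ c : Tw → ℤ,
      ((x, y, 0) : (V → ℤ) × (E → ℤ) × (R → ℤ)) = ∑ t : Tw, c t • S.chi t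

/-!
For `c : Tw → ℤ`, the `V`-, `E`- and `R`-parts of `∑ t, c t • S.chi t` are the fibre sums of `c`
over `vw`, `ew` and `rW`. The coboundary `δ_E w` of a potential `w` on `D_E` has vanishing `V`-
and `R`-parts and `E`-part `Δ_E w`. The heart of the proof is the converse: every `c` with
vanishing `V`- and `R`-parts is some `δ_E w`. Over `ℚ` this is a dimension count, from the
connectivity of `D_E`, the fact that the `(V, R)`-parts of all `c` fill the hyperplane
`∑ a = ∑ b`, and Euler's formula; `w` can be taken integral because it changes by integers along
the edges of the connected digraph `D_E`.
Now if `(x, y)` and `(x', y')` come from `c` and `c'` and `x' = x + Δ_V z`, then `c' - c - δ_V z`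
has vanishing `V`- and `R`-parts, so it is some `δ_E w`, and `y' = y + Δ_E w`. Injectivity and
surjectivity are well-definedness and totality for the trinity with `V` and `E` interchanged.
-/

section FiberSum

variable {α α' β : Type} [Fintype α] [DecidableEq β] (k : Type) [CommRing k]

def fiberSum (f : α → β) : (α → k) →ₗ[k] (β → k) where
  toFun c b := ∑ a, if f a = b then c a else 0
  map_add' c c' := by
    funext b
    simp only [Pi.add_apply, ← Finset.sum_add_distrib]
    exact Finset.sum_congr rfl fun a _ => by split_ifs <;> simp
  map_smul' r c := by
    funext b
    simp only [Pi.smul_apply, smul_eq_mul, Finset.mul_sum, RingHom.id_apply]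
    exact Finset.sum_congr rfl fun a _ => by split_ifs <;> simp

variable {k}

theorem fiberSum_apply (f : α → β) (c : α → k) (b : β) :
    fiberSum k f c b = ∑ a, if f a = b then c a else 0 := rfl

theorem fiberSum_comp_equiv [Fintype α'] (f : α → β) (τ : α' ≃ α) (c : α → k) :
    fiberSum k (f ∘ τ) (c ∘ τ) = fiberSum k f c := by
  funext b
  exact τ.sum_comp fun a => if f a = b then c a else 0

theorem fiberSum_comp_perm (f : α → β) (τ : α ≃ α) (hτ : ∀ a, f (τ a) = f a) (c : α → k) :
    fiberSum k f (c ∘ τ) = fiberSum k f c := by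
  conv_lhs => rw [show f = f ∘ τ from funext fun a => (hτ a).symm]
  exact fiberSum_comp_equiv f τ c

theorem sum_fiberSum [Fintype β] (f : α → β) (c : α → k) :
    ∑ b, fiberSum k f c b = ∑ a, c a := by
  simp only [fiberSum_apply]
  rw [Finset.sum_comm]
  simp

theorem fiberSum_basis [DecidableEq α] (f : α → β) (a : α) :
    fiberSum k f (fun j => if a = j then 1 else 0) = fun b => if f a = b then 1 else 0 := by
  funext b
  rw [fiberSum_apply, Finset.sum_eq_single a (fun j _ hj => by simp [Ne.symm hj]) (by simp)]
  simp

theorem fiberSum_comp_ringHom {k' : Type} [CommRing k'] (φ : k →+* k') (f : α → β)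
    (c : α → k) : fiberSum k' f (φ ∘ c) = φ ∘ fiberSum k f c := by
  funext b
  simp [fiberSum_apply, map_sum, apply_ite φ]

end FiberSum

theorem Relation.ReflTransGen.apply_eq_s16 {α M : Type} {r : α → α → Prop} {a b : α}
    (g : α → M) (hg : ∀ x y, r x y → g x = g y) (hab : Relation.ReflTransGen r a b) :
    g a = g b := by
  simpa [Relation.reflTransGen_eq_self] using hab.lift g hg

namespace Trinity

variable {V E R Tw Tb : Type}

/-- The same trinity with the colours `V` and `E` interchanged. Its `lapE`, `linEqE` and
`coboundaryE` are, by definition, `lapV`, `linEqV` and the coboundary of `D_V` for `S`. -/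
def swapVE (S : Trinity V E R Tw Tb) : Trinity E V R Tw Tb where
  vw := S.ew
  ew := S.vw
  rW := S.rW
  vb := S.eb
  eb := S.vb
  rb := S.rb
  σR := S.σR
  σE := S.σV
  σV := S.σE
  σR_v := S.σR_e
  σR_e := S.σR_v
  σE_v := S.σV_e
  σE_r := S.σV_r
  σV_e := S.σE_v
  σV_r := S.σE_r
  vsurj := S.esurj
  esurj := S.vsurj
  rsurj := S.rsurj
  linkV := S.linkE
  linkE := S.linkV
  linkR t t' h := Relation.ReflTransGen.mono (fun _ _ h => Eq.symm h) _ _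
    (Relation.ReflTransGen.swap _ _ (S.linkR t' t h.symm))
  conn t t' := Relation.ReflTransGen.mono (fun _ _ h => by tauto) _ _ (S.conn t t')

theorem nonempty_of_card_eq (S : Trinity V E R Tw Tb)
    [Fintype V] [Fintype E] [Fintype R] [Fintype Tw]
    (heuler : Fintype.card V + Fintype.card E + Fintype.card R = Fintype.card Tw + 2) :
    Nonempty Tw := by
  have hV := Fintype.card_le_of_surjective _ S.vsurj
  have hE := Fintype.card_le_of_surjective _ S.esurj
  have hR := Fintype.card_le_of_surjective _ S.rsurj
  exact Fintype.card_pos_iff.1 (by omega)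

variable (S : Trinity V E R Tw Tb)

theorem eq_of_vw_rW_invariant {M : Type} (g : Tw → M)
    (hv : ∀ a b, S.vw a = S.vw b → g a = g b) (hr : ∀ a b, S.rW a = S.rW b → g a = g b)
    (a b : Tw) : g a = g b := by
  refine (S.conn a b).apply_eq_s16 g fun a b h => ?_
  rcases h with h | h | h | h | h | h
  · exact hv a b (by rw [← S.σR_v, h, S.σE_v])
  · -- `t` shares its violet vertex with `a` and its red vertex with `b`
    set t := S.σE.symm (S.σR a)
    have ht : S.σE t = S.σR a := S.σE.apply_symm_apply _
    exact (hv a t (by rw [← S.σE_v t, ht, S.σR_v])).trans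
      (hr t b (by rw [← S.σE_r t, ht, h, S.σV_r]))
  · exact hv a b (by rw [← S.σE_v, h, S.σR_v])
  · exact hr a b (by rw [← S.σE_r, h, S.σV_r])
  · set t := S.σE.symm (S.σR b)
    have ht : S.σE t = S.σR b := S.σE.apply_symm_apply _
    exact (hr a t (by rw [← S.σE_r t, ht, ← h, S.σV_r])).trans
      (hv t b (by rw [← S.σE_v t, ht, S.σR_v]))
  · exact hr a b (by rw [← S.σV_r, h, S.σE_r])

theorem eq_of_edgeE_invariant {M : Type} (w : E → M)
    (hw : ∀ t, w (S.eb (S.σE t)) = w (S.ew t)) (e e' : E) : w e = w e' := by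
  obtain ⟨a, rfl⟩ := S.esurj e
  obtain ⟨b, rfl⟩ := S.esurj e'
  refine S.swapVE.eq_of_vw_rW_invariant (w ∘ S.ew) (fun a b h => congrArg w h)
    (fun a b h => (S.linkR a b h).apply_eq_s16 _ fun x y hxy => ?_) a b
  change w (S.ew x) = w (S.ew y)
  rw [← hw, hxy, S.σV_e]

section Boundary

variable (k : Type) [CommRing k]

def coboundaryE : (E → k) →ₗ[k] (Tw → k) :=
  LinearMap.funLeft k k (S.eb ∘ S.σE) - LinearMap.funLeft k k S.ew

def boundaryVR [Fintype Tw] [DecidableEq V] [DecidableEq R] :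
    (Tw → k) →ₗ[k] (V → k) × (R → k) :=
  (fiberSum k S.vw).prod (fiberSum k S.rW)

variable {k}

theorem coboundaryE_apply (w : E → k) (t : Tw) :
    S.coboundaryE k w t = w (S.eb (S.σE t)) - w (S.ew t) := rfl

variable [Fintype Tw]

theorem boundaryVR_apply [DecidableEq V] [DecidableEq R] (c : Tw → k) :
    S.boundaryVR k c = (fiberSum k S.vw c, fiberSum k S.rW c) := rfl

theorem mem_ker_boundaryVR [DecidableEq V] [DecidableEq R] {c : Tw → k} :
    c ∈ LinearMap.ker (S.boundaryVR k) ↔ fiberSum k S.vw c = 0 ∧ fiberSum k S.rW c = 0 := by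
  rw [LinearMap.mem_ker, boundaryVR_apply, Prod.mk_eq_zero]

theorem fiberSum_vw_coboundaryE [DecidableEq V] (w : E → k) :
    fiberSum k S.vw (S.coboundaryE k w) = 0 := by
  have h := fiberSum_comp_perm (k := k) S.vw (S.σR.trans S.σE.symm)
    (fun t => by simp [← S.σE_v, S.σR_v]) (w ∘ S.eb ∘ S.σE)
  rw [coboundaryE, LinearMap.sub_apply, map_sub, sub_eq_zero]
  refine h.symm.trans (congrArg _ (funext fun t => ?_))
  simp [S.σR_e]

theorem fiberSum_rW_coboundaryE [DecidableEq R] (w : E → k) :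
    fiberSum k S.rW (S.coboundaryE k w) = 0 := by
  have h := fiberSum_comp_perm (k := k) S.rW (S.σV.trans S.σE.symm)
    (fun t => by simp [← S.σE_r, S.σV_r]) (w ∘ S.eb ∘ S.σE)
  rw [coboundaryE, LinearMap.sub_apply, map_sub, sub_eq_zero]
  refine h.symm.trans (congrArg _ (funext fun t => ?_))
  simp [S.σV_e]

theorem fiberSum_ew_coboundaryE [DecidableEq E] (w : E → ℤ) :
    fiberSum ℤ S.ew (S.coboundaryE ℤ w) = S.lapE w := by
  have hτ : (S.eb ∘ S.σE) ∘ (S.σV.trans S.σE.symm) = S.ew :=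
    funext fun t => by simp [S.σV_e]
  have key := fiberSum_comp_equiv (k := ℤ) (S.eb ∘ S.σE) (S.σV.trans S.σE.symm)
    (w ∘ S.eb ∘ S.σE)
  rw [hτ, Function.comp_assoc, hτ] at key
  funext u
  have hu := congrFun key u
  simp only [fiberSum_apply, Function.comp_apply] at hu
  simp only [fiberSum_apply, coboundaryE_apply, lapE, mul_sub, mul_ite, mul_one, mul_zero,
    Finset.sum_sub_distrib]
  rw [← hu, ← Finset.sum_sub_distrib]
  exact Finset.sum_congr rfl fun t _ => by split_ifs <;> simp

theorem mem_range_boundaryVR [DecidableEq V] [DecidableEq R] [Fintype V] [Fintype R]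
    [Nonempty Tw] {a : V → k} {b : R → k} (hab : ∑ v, a v = ∑ r, b r) :
    (a, b) ∈ LinearMap.range (S.boundaryVR k) := by
  classical
  obtain ⟨t₀⟩ := ‹Nonempty Tw›
  set π := (LinearMap.range (S.boundaryVR k)).mkQ
  let πV : (V → k) →ₗ[k] _ := π ∘ₗ LinearMap.inl k _ _
  let πR : (R → k) →ₗ[k] _ := π ∘ₗ LinearMap.inr k _ _
  have hχ : ∀ t, πV (fun v => if S.vw t = v then 1 else 0) =
      -πR (fun r => if S.rW t = r then 1 else 0) := by
    intro t
    rw [eq_neg_iff_add_eq_zero]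
    refine (Submodule.Quotient.mk_eq_zero _).2 ⟨fun s => if t = s then 1 else 0, ?_⟩
    simp [boundaryVR, fiberSum_basis]
  set q := πV (fun v => if S.vw t₀ = v then 1 else 0)
  -- by `hχ`, the class of `δ_{vw t}` depends only on `vw t` and only on `rW t`
  have hV : ∀ v, πV (fun j => if v = j then 1 else 0) = q := by
    intro v
    obtain ⟨t, rfl⟩ := S.vsurj v
    exact S.eq_of_vw_rW_invariant (fun t => πV (fun v => if S.vw t = v then 1 else 0))
      (fun a b h => by simp only [h]) (fun a b h => by simp only [hχ, h]) t t₀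
  have hR : ∀ r, πR (fun j => if r = j then 1 else 0) = -q := by
    intro r
    obtain ⟨t, rfl⟩ := S.rsurj r
    rw [← hV (S.vw t), hχ, neg_neg]
  have : π (a, b) = 0 := calc
    π (a, b) = πV a + πR b := by simp [πV, πR, ← map_add]
    _ = ∑ v, a v • q - ∑ r, b r • q := by
      simp only [LinearMap.pi_apply_eq_sum_univ πV a, LinearMap.pi_apply_eq_sum_univ πR b,
        hV, hR, smul_neg, Finset.sum_neg_distrib, sub_eq_add_neg]
    _ = (∑ v, a v - ∑ r, b r) • q := by rw [sub_smul, Finset.sum_smul, Finset.sum_smul]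
    _ = 0 := by rw [hab, sub_self, zero_smul]
  exact (Submodule.Quotient.mk_eq_zero _).1 this

end Boundary

section PhiRel

variable [Fintype Tw] [DecidableEq V] [DecidableEq E] [DecidableEq R]

theorem sum_smul_chi_s16 (c : Tw → ℤ) :
    ∑ t, c t • S.chi t = (fiberSum ℤ S.vw c, fiberSum ℤ S.ew c, fiberSum ℤ S.rW c) := by
  ext <;> simp [chi, fiberSum_apply, Prod.fst_sum, Prod.snd_sum, Finset.sum_apply, mul_ite]

variable [Fintype V] [Fintype E]

theorem phiRel_iff (x : V → ℤ) (y : E → ℤ) :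
    phiRel S x y ↔ (∑ v, x v = 0) ∧ (∑ e, y e = 0) ∧ ∃ c : Tw → ℤ,
      fiberSum ℤ S.vw c = x ∧ fiberSum ℤ S.ew c = y ∧ fiberSum ℤ S.rW c = 0 := by
  refine and_congr_right' (and_congr_right' (exists_congr fun c => ?_))
  rw [sum_smul_chi_s16, Prod.mk.injEq, Prod.mk.injEq]
  exact ⟨fun ⟨h1, h2, h3⟩ => ⟨h1.symm, h2.symm, h3.symm⟩,
    fun ⟨h1, h2, h3⟩ => ⟨h1.symm, h2.symm, h3.symm⟩⟩

theorem phiRel_swapVE {x : V → ℤ} {y : E → ℤ} : phiRel S.swapVE y x ↔ phiRel S x y := by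
  rw [phiRel_iff, phiRel_iff]
  exact ⟨fun ⟨hy, hx, c, h1, h2, h3⟩ => ⟨hx, hy, c, h2, h1, h3⟩,
    fun ⟨hx, hy, c, h1, h2, h3⟩ => ⟨hy, hx, c, h2, h1, h3⟩⟩

theorem phiRel_add {x x' : V → ℤ} {y y' : E → ℤ} (h : phiRel S x y) (h' : phiRel S x' y') :
    phiRel S (x + x') (y + y') := by
  obtain ⟨hx, hy, c, hc⟩ := h
  obtain ⟨hx', hy', c', hc'⟩ := h'
  refine ⟨by simp [Finset.sum_add_distrib, hx, hx'], by simp [Finset.sum_add_distrib, hy, hy'],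
    c + c', ?_⟩
  simp only [Pi.add_apply, add_smul, Finset.sum_add_distrib, ← hc, ← hc', Prod.mk_add_mk,
    add_zero]

end PhiRel

variable [Fintype V] [Fintype E] [Fintype R] [Fintype Tw] [DecidableEq V] [DecidableEq R]

theorem ker_boundaryVR_eq_range_coboundaryE {k : Type} [Field k] [Nonempty Tw]
    (heuler : Fintype.card V + Fintype.card E + Fintype.card R = Fintype.card Tw + 2) :
    LinearMap.ker (S.boundaryVR k) = LinearMap.range (S.coboundaryE k) := by
  have hle : LinearMap.range (S.coboundaryE k) ≤ LinearMap.ker (S.boundaryVR k) := by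
    rintro _ ⟨w, rfl⟩
    exact S.mem_ker_boundaryVR.2 ⟨S.fiberSum_vw_coboundaryE w, S.fiberSum_rW_coboundaryE w⟩
  have hT : Module.finrank k (LinearMap.ker (S.coboundaryE k)) ≤ 1 := by
    obtain ⟨t₀⟩ := ‹Nonempty Tw›
    have hconst : LinearMap.ker (S.coboundaryE k) ≤ k ∙ (1 : E → k) := fun w hw =>
      Submodule.mem_span_singleton.2 ⟨w (S.ew t₀), funext fun e => by
        simpa using S.eq_of_edgeE_invariant w (fun t => sub_eq_zero.1 (congrFun hw t)) _ e⟩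
    exact (Submodule.finrank_mono hconst).trans ((finrank_span_le_card _).trans (by simp))
  let σ : (V → k) × (R → k) →ₗ[k] k :=
    (∑ v, LinearMap.proj v).coprod (-∑ r, LinearMap.proj r)
  have hσ : Module.finrank k (LinearMap.ker σ) ≤
      Module.finrank k (LinearMap.range (S.boundaryVR k)) :=
    Submodule.finrank_mono fun p hp => S.mem_range_boundaryVR (by
      simpa [σ, sub_eq_zero, add_neg_eq_zero] using hp)
  have hσ' : Module.finrank k (LinearMap.range σ) ≤ 1 :=
    (Submodule.finrank_le _).trans (Module.finrank_self k).le
  have hrnT := LinearMap.finrank_range_add_finrank_ker (S.coboundaryE k)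
  have hrnB := LinearMap.finrank_range_add_finrank_ker (S.boundaryVR k)
  have hrnσ := LinearMap.finrank_range_add_finrank_ker σ
  simp only [Module.finrank_prod, Module.finrank_fintype_fun_eq_card] at hrnT hrnB hrnσ
  -- `dim ker ∂ ≤ |Tw| - (|V| + |R| - 1) = |E| - 1 ≤ rank δ_E`, by Euler's formula
  exact (Submodule.eq_of_le_of_finrank_le hle (by omega)).symm

theorem exists_coboundaryE_eq [Nonempty Tw]
    (heuler : Fintype.card V + Fintype.card E + Fintype.card R = Fintype.card Tw + 2)
    {d : Tw → ℤ} (hd : d ∈ LinearMap.ker (S.boundaryVR ℤ)) :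
    ∃ w : E → ℤ, S.coboundaryE ℤ w = d := by
  obtain ⟨hV, hR⟩ := S.mem_ker_boundaryVR.1 hd
  have hdq : Int.castRingHom ℚ ∘ d ∈ LinearMap.ker (S.boundaryVR ℚ) := by
    rw [mem_ker_boundaryVR, fiberSum_comp_ringHom, fiberSum_comp_ringHom, hV, hR]
    simp
  obtain ⟨w, hw⟩ : Int.castRingHom ℚ ∘ d ∈ LinearMap.range (S.coboundaryE ℚ) :=
    S.ker_boundaryVR_eq_range_coboundaryE (k := ℚ) heuler ▸ hdq
  have hwd : ∀ t, w (S.eb (S.σE t)) = w (S.ew t) + d t := fun t => by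
    have := congrFun hw t
    simp only [coboundaryE_apply, Function.comp_apply, eq_intCast] at this
    linarith
  have hfract : ∀ e e', Int.fract (w e) = Int.fract (w e') :=
    S.eq_of_edgeE_invariant (Int.fract ∘ w) fun t => by simp [hwd, Int.fract_add_intCast]
  refine ⟨fun e => ⌊w e⌋, funext fun t => ?_⟩
  have h1 := Int.self_sub_fract (w (S.eb (S.σE t)))
  have h2 := Int.self_sub_fract (w (S.ew t))
  have h3 := hfract (S.eb (S.σE t)) (S.ew t)
  have h4 := hwd t
  rw [coboundaryE_apply]
  exact_mod_cast (by push_cast; linarith :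
    ((⌊w (S.eb (S.σE t))⌋ - ⌊w (S.ew t)⌋ : ℤ) : ℚ) = d t)

variable [DecidableEq E]

theorem linEqE_of_linEqV [Nonempty Tw]
    (heuler : Fintype.card V + Fintype.card E + Fintype.card R = Fintype.card Tw + 2)
    {x x' : V → ℤ} {y y' : E → ℤ} (h : phiRel S x y) (h' : phiRel S x' y')
    (hx : S.linEqV x x') : S.linEqE y y' := by
  obtain ⟨-, -, c, rfl, rfl, hc⟩ := (S.phiRel_iff _ _).1 h
  obtain ⟨-, -, c', rfl, rfl, hc'⟩ := (S.phiRel_iff _ _).1 h'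
  obtain ⟨z, hz⟩ := hx
  have hV : fiberSum ℤ S.vw (S.swapVE.coboundaryE ℤ z) = S.lapV z :=
    S.swapVE.fiberSum_ew_coboundaryE z
  have hE : fiberSum ℤ S.ew (S.swapVE.coboundaryE ℤ z) = 0 :=
    S.swapVE.fiberSum_vw_coboundaryE z
  have hR : fiberSum ℤ S.rW (S.swapVE.coboundaryE ℤ z) = 0 :=
    S.swapVE.fiberSum_rW_coboundaryE z
  have hd : c' - c - S.swapVE.coboundaryE ℤ z ∈ LinearMap.ker (S.boundaryVR ℤ) := by
    refine S.mem_ker_boundaryVR.2 ⟨?_, ?_⟩ <;> simp [hV, hR, hc, hc', hz]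
  obtain ⟨w, hw⟩ := S.exists_coboundaryE_eq heuler hd
  refine ⟨w, ?_⟩
  rw [← S.fiberSum_ew_coboundaryE, hw, map_sub, map_sub, hE]
  abel

theorem exists_phiRel [Nonempty Tw] {x : V → ℤ} (hx : ∑ v, x v = 0) : ∃ y, phiRel S x y := by
  obtain ⟨c, hc⟩ := S.mem_range_boundaryVR (a := x) (b := (0 : R → ℤ)) (by simp [hx])
  obtain ⟨hcV, hcR⟩ : fiberSum ℤ S.vw c = x ∧ fiberSum ℤ S.rW c = 0 := by
    simpa [boundaryVR_apply] using hc
  refine ⟨fiberSum ℤ S.ew c, (S.phiRel_iff _ _).2 ⟨hx, ?_, c, hcV, rfl, hcR⟩⟩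
  rw [sum_fiberSum, ← sum_fiberSum S.vw, hcV, hx]

end Trinity

/-- the map `φ_{V→E} : Pic⁰(D_V) → Pic⁰(D_E)`, defined by
`φ_{V→E}([x]) = [y]` whenever `(x, 0, 0) ≈_W (0, −y, 0)`, is a well-defined group
isomorphism: it is well defined (descends to linear-equivalence classes), totally
defined, injective, surjective, and additive. -/
theorem phi_V_to_E_well_defined_isomorphism
    {V E R Tw Tb : Type} [Fintype V] [Fintype E] [Fintype R] [Fintype Tw]
    [DecidableEq V] [DecidableEq E] [DecidableEq R]
    (S : Trinity V E R Tw Tb)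
    (heuler : Fintype.card V + Fintype.card E + Fintype.card R = Fintype.card Tw + 2) :
    (∀ x x' y y', phiRel S x y → phiRel S x' y' → S.linEqV x x' → S.linEqE y y') ∧
    (∀ x : V → ℤ, ∑ v, x v = 0 → ∃ y : E → ℤ, phiRel S x y) ∧
    (∀ x x' y y', phiRel S x y → phiRel S x' y' → S.linEqE y y' → S.linEqV x x') ∧
    (∀ y : E → ℤ, ∑ e, y e = 0 → ∃ x : V → ℤ, phiRel S x y) ∧
    (∀ x x' y y', phiRel S x y → phiRel S x' y' → phiRel S (x + x') (y + y')) := by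
  have := S.nonempty_of_card_eq heuler
  have heuler' : Fintype.card E + Fintype.card V + Fintype.card R = Fintype.card Tw + 2 := by
    omega
  refine ⟨fun _ _ _ _ => S.linEqE_of_linEqV heuler, fun _ => S.exists_phiRel,
    fun _ _ _ _ h h' => S.swapVE.linEqE_of_linEqV heuler' (S.phiRel_swapVE.2 h)
      (S.phiRel_swapVE.2 h'),
    fun _ hy => ?_, fun _ _ _ _ => S.phiRel_add⟩
  obtain ⟨x, hx⟩ := S.swapVE.exists_phiRel hy
  exact ⟨x, S.phiRel_swapVE.1 hx⟩
end

section
/- Let T and T' be spanning trees of a finite graph H embedded in the sphere, with T' = (T − {f₁,…,f_k}) ∪ {g₁,…,g_k}. Let A and A' be the dual spanning trees in the dual graph H* (consisting of duals of non-edges of T resp. T'). If A and A' are in-arborescences of an orientation D of H* rooted at the same vertex r₀, then each red vertex r that is the head of some f_i* in A' ∪ {f_i*} is distinct from r₀, the heads of f₁*,…,f_k* are pairwise distinct, and after relabeling, f_i* and g_i* have the same head for each i. -/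
open Finset

/-- `A` is a (spanning out-)arborescence rooted at `r₀` in the digraph with arc set
`Arc`: no arc of `A` has head `r₀`, every other vertex is the head of exactly one arc
of `A`, and every vertex is reachable from `r₀` along arcs of `A`. -/
def IsArbFinset {Vt Arc : Type} (tail head : Arc → Vt) (r₀ : Vt) (A : Finset Arc) : Prop :=
  (∀ a ∈ A, head a ≠ r₀) ∧
  (∀ v : Vt, v ≠ r₀ → ∃! a : Arc, a ∈ A ∧ head a = v) ∧
  (∀ v : Vt, Relation.ReflTransGen
    (fun x y => ∃ a ∈ A, tail a = x ∧ head a = y) r₀ v)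

/-- if the arborescences `A` and `A'` rooted at `r₀` satisfy
`A' = (A \ G) ∪ F` with `F` disjoint from `A` and `G ⊆ A`, then no arc of `F` has head
`r₀`, the heads of the arcs of `F` are pairwise distinct, and after relabeling the
arcs of `F` and `G` have matching heads. -/
theorem dual_tree_exchange_heads
    {Vt Arc : Type} [Fintype Vt] [Fintype Arc] [DecidableEq Vt] [DecidableEq Arc]
    (tail head : Arc → Vt) (r₀ : Vt)
    (A A' F G : Finset Arc)
    (hA : IsArbFinset tail head r₀ A)
    (hA' : IsArbFinset tail head r₀ A')
    (hF : ∀ a ∈ F, a ∉ A)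
    (hG : G ⊆ A)
    (hA'eq : A' = (A \ G) ∪ F) :
    (∀ a ∈ F, head a ≠ r₀) ∧
    Set.InjOn head (F : Set Arc) ∧
    ∃ π : {a // a ∈ F} ≃ {a // a ∈ G}, ∀ a : {a // a ∈ F},
      head ((π a : {a // a ∈ G}) : Arc) = head (a : Arc) := by
  obtain ⟨hA1, hA2, hA3⟩ := hA
  obtain ⟨hA'1, hA'2, hA'3⟩ := hA'
  have hFA' : ∀ a ∈ F, a ∈ A' := by
    intro a ha; rw [hA'eq]; exact Finset.mem_union_right _ ha
  have h1 : ∀ a ∈ F, head a ≠ r₀ := fun a ha => hA'1 a (hFA' a ha)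
  have h2 : Set.InjOn head (F : Set Arc) := by
    intro a ha b hb hab
    obtain ⟨c, _, huniq⟩ := hA'2 (head a) (h1 a ha)
    have h1' := huniq a ⟨hFA' a ha, rfl⟩
    have h2' := huniq b ⟨hFA' b hb, hab.symm⟩
    rw [h1', h2']
  have h2G : Set.InjOn head (G : Set Arc) := by
    intro a ha b hb hab
    obtain ⟨c, _, huniq⟩ := hA2 (head a) (hA1 a (hG ha))
    have h1' := huniq a ⟨hG ha, rfl⟩
    have h2' := huniq b ⟨hG hb, hab.symm⟩
    rw [h1', h2']
  have toG : ∀ a : {a // a ∈ F}, ∃ b : {b // b ∈ G}, head (b : Arc) = head (a : Arc) := by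
    rintro ⟨a, ha⟩
    obtain ⟨b, ⟨hbA, hbh⟩, huniq⟩ := hA2 (head a) (h1 a ha)
    have hbG : b ∈ G := by
      by_contra hb
      have hbA' : b ∈ A' := by
        rw [hA'eq]; exact Finset.mem_union_left _ (Finset.mem_sdiff.mpr ⟨hbA, hb⟩)
      obtain ⟨c, _, huniq'⟩ := hA'2 (head a) (h1 a ha)
      have := (huniq' a ⟨hFA' a ha, rfl⟩).trans (huniq' b ⟨hbA', hbh⟩).symm
      exact hF a ha (this ▸ hbA)
    exact ⟨⟨b, hbG⟩, hbh⟩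
  have toF : ∀ b : {b // b ∈ G}, ∃ a : {a // a ∈ F}, head (a : Arc) = head (b : Arc) := by
    rintro ⟨b, hb⟩
    obtain ⟨a, ⟨haA', hah⟩, huniq⟩ := hA'2 (head b) (hA1 b (hG hb))
    have haF : a ∈ F := by
      by_contra ha
      have haA : a ∈ A\G := by
        rcases Finset.mem_union.mp (hA'eq ▸ haA') with h | h
        · exact h
        · exact absurd h ha
      obtain ⟨c, _, huniq'⟩ := hA2 (head b) (hA1 b (hG hb))
      have := (huniq' a ⟨(Finset.mem_sdiff.mp haA).1, hah⟩).trans (huniq' b ⟨hG hb, rfl⟩).symm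
      exact (Finset.mem_sdiff.mp haA).2 (this ▸ hb)
    exact ⟨⟨a, haF⟩, hah⟩
  choose φ hφ using toG
  choose ψ hψ using toF
  refine ⟨h1, h2, ⟨⟨φ, ψ, ?_, ?_⟩, fun a => hφ a⟩⟩
  · intro a
    apply Subtype.ext
    exact h2 (ψ (φ a)).2 a.2 ((hψ (φ a)).trans (hφ a))
  · intro b
    apply Subtype.ext
    exact h2G (φ (ψ b)).2 b.2 ((hφ (ψ b)).trans (hψ b))
end

section
/- Let D be a finite connected Eulerian digraph with a root vertex v₀, and suppose A and A' are in-arborescences rooted at v₀ such that A' = A − wv + wv'' where the out-edges at w in the ribbon structure occur in cyclic order wv = wu₀, wu₁, …, wu_k = wv''. Then the chip configuration x = k·1_w − 1_{u₁} − ⋯ − 1_{u_k} satisfies: playing the rotor-routing game from (x, A) by performing k routings at w yields (0, A'). -/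
open Finset

/-- if the in-arborescences `ρ` and `ρ'` (as rotor configurations)
rooted at `v₀` differ only at `w`, where the rotor is advanced `k` steps, then playing
the rotor-routing game from `(x, ρ)` with `x = k·1_w − 1_{u₁} − ⋯ − 1_{u_k}`
(`u_i` the head of the `i`-th advanced rotor arc at `w`) by performing `k` routings at
`w` is legal and yields `(0, ρ')`. -/
theorem rotor_routing_k_routings
    {V Arc : Type} [Fintype V] [Fintype Arc] [DecidableEq V]
    (tail head : Arc → V)
    (hloopless : ∀ a : Arc, head a ≠ tail a)
    (hEulerian : ∀ v : V, ({a : Arc | tail a = v}).ncard = ({a : Arc | head a = v}).ncard)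
    (hconn : ∀ u v : V,
      Relation.ReflTransGen (fun x y => ∃ a : Arc, tail a = x ∧ head a = y) u v)
    (next : Arc → Arc)
    (hnext_tail : ∀ a, tail (next a) = tail a)
    (hribbon : ∀ a b : Arc, tail a = tail b → ∃ n : ℕ, next^[n] a = b)
    (v₀ w : V) (hw : w ≠ v₀)
    (ρ ρ' : V → Arc)
    (hρ : ∀ v, tail (ρ v) = v)
    (hρ' : ∀ v, tail (ρ' v) = v)
    (hArb : ∀ v : V, ∃ n : ℕ, (fun u => head (ρ u))^[n] v = v₀)
    (hArb' : ∀ v : V, ∃ n : ℕ, (fun u => head (ρ' u))^[n] v = v₀)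
    (k : ℕ)
    (hρ'eq : ρ' = Function.update ρ w (next^[k] (ρ w)))
    (x : V → ℤ)
    (hx : x = fun v => (k : ℤ) * (if v = w then 1 else 0) -
      ∑ i ∈ Finset.Icc 1 k, (if head (next^[i] (ρ w)) = v then 1 else 0)) :
    let route : (V → ℤ) × (V → Arc) → (V → ℤ) × (V → Arc) := fun p =>
      (fun v => p.1 v - (if v = w then 1 else 0) +
        (if head (next (p.2 w)) = v then 1 else 0),
       Function.update p.2 w (next (p.2 w)))
    route^[k] (x, ρ) = (0, ρ') ∧ ∀ i < k, 0 < ((route^[i]) (x, ρ)).1 w := by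
  intro route
  -- tail of iterated next of ρ w stays w
  have htail : ∀ n : ℕ, tail (next^[n] (ρ w)) = w := by
    intro n
    induction n with
    | zero => exact hρ w
    | succ n ih => rw [Function.iterate_succ_apply', hnext_tail]; exact ih
  -- the main closed form for route^[i]
  have hiter : ∀ i : ℕ, route^[i] (x, ρ) =
      (fun v => x v - (i : ℤ) * (if v = w then 1 else 0) +
        ∑ j ∈ Finset.Icc 1 i, (if head (next^[j] (ρ w)) = v then 1 else 0),
       Function.update ρ w (next^[i] (ρ w))) := by
    intro i
    induction i with
    | zero =>
        simp only [Function.iterate_zero, id_eq]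
        refine Prod.ext ?_ ?_
        · funext v; simp
        · simp [Function.update_eq_self]
    | succ i ih =>
        rw [Function.iterate_succ_apply', ih]
        simp only [route]
        have hupd : Function.update ρ w (next^[i] (ρ w)) w = next^[i] (ρ w) :=
          Function.update_self _ _ _
        refine Prod.ext ?_ ?_
        · funext v
          simp only [hupd]
          rw [Finset.sum_Icc_succ_top (by omega : 1 ≤ i + 1)]
          rw [← Function.iterate_succ_apply' next i (ρ w)]
          push_cast
          ring
        · simp only [hupd]
          rw [← Function.iterate_succ_apply' next i (ρ w)]
          funext v
          by_cases hv : v = w <;> simp [Function.update, hv]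
  constructor
  · rw [hiter k]
    refine Prod.ext ?_ ?_
    · funext v
      simp only [hx, Pi.zero_apply]
      ring
    · simp [hρ'eq]
  · intro i hi
    rw [hiter i]
    have hind : ∀ j : ℕ, (if head (next^[j] (ρ w)) = w then (1:ℤ) else 0) = 0 := by
      intro j
      have := hloopless (next^[j] (ρ w))
      rw [htail j] at this
      simp [this]
    simp only [hx, if_pos rfl]
    rw [Finset.sum_congr rfl (fun j _ => hind j),
        Finset.sum_congr rfl (fun j _ => hind j)]
    simp
    omega
end
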